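/- arXiv:2509.19689 — 7 statements merged into one kernel-verified Lean document; each statement's English description precedes it below -/
import Mathlib

section
/- For all vectors u, v, w, X in V, the trace of the composite endomorphism c̃(u)∘c̃(v)∘c̃(w)∘c(X) of ΛV equals (a₀b₀(a₀+b₀)/2)·[g(u,X)g(v,w) − g(v,X)g(u,w) + g(w,X)g(u,v)]·Tr(Id). -/
open scoped RealInnerProductSpace

noncomputable def eps {V : Type*} [NormedAddCommGroup V] [InnerProductSpace ℝ V]
    (v : V) : Module.End ℝ (ExteriorAlgebra ℝ V) :=
  LinearMap.mulLeft ℝ (ExteriorAlgebra.ι ℝ v)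

noncomputable def iot {V : Type*} [NormedAddCommGroup V] [InnerProductSpace ℝ V]
    (v : V) : Module.End ℝ (ExteriorAlgebra ℝ V) :=
  CliffordAlgebra.contractLeft (innerₛₗ ℝ v)

noncomputable def ctil {V : Type*} [NormedAddCommGroup V] [InnerProductSpace ℝ V]
    (a₀ b₀ : ℝ) (v : V) : Module.End ℝ (ExteriorAlgebra ℝ V) :=
  a₀ • eps v - b₀ • iot v

noncomputable def cbar {V : Type*} [NormedAddCommGroup V] [InnerProductSpace ℝ V]
    (a₀ b₀ : ℝ) (v : V) : Module.End ℝ (ExteriorAlgebra ℝ V) :=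
  b₀ • eps v - a₀ • iot v

noncomputable def cmap {V : Type*} [NormedAddCommGroup V] [InnerProductSpace ℝ V]
    (v : V) : Module.End ℝ (ExteriorAlgebra ℝ V) :=
  eps v - iot v

noncomputable def chat {V : Type*} [NormedAddCommGroup V] [InnerProductSpace ℝ V]
    (v : V) : Module.End ℝ (ExteriorAlgebra ℝ V) :=
  eps v + iot v

noncomputable def Tr {V : Type*} [NormedAddCommGroup V] [InnerProductSpace ℝ V] :
    Module.End ℝ (ExteriorAlgebra ℝ V) →ₗ[ℝ] ℝ :=
  LinearMap.trace ℝ (ExteriorAlgebra ℝ V)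

section Aux
variable {V : Type*} [NormedAddCommGroup V] [InnerProductSpace ℝ V]

lemma swap3 (a b : V) (x : Module.End ℝ (ExteriorAlgebra ℝ V)) :
    iot a * (eps b * x) = ⟪a, b⟫ • x - eps b * (iot a * x) := by
  apply LinearMap.ext; intro y
  simp only [Module.End.mul_apply, LinearMap.sub_apply, LinearMap.smul_apply]
  show CliffordAlgebra.contractLeft (innerₛₗ ℝ a) (ExteriorAlgebra.ι ℝ b * x y) = _
  rw [CliffordAlgebra.contractLeft_ι_mul]
  rfl

lemma swap2 (a b : V) :
    iot a * eps b = ⟪a, b⟫ • (1 : Module.End ℝ (ExteriorAlgebra ℝ V)) - eps b * iot a := by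
  have h := swap3 a b 1
  simpa using h

lemma ee2 (a b : V) : (eps a * eps b : Module.End ℝ (ExteriorAlgebra ℝ V)) = -(eps b * eps a) := by
  apply LinearMap.ext; intro y
  simp only [Module.End.mul_apply, LinearMap.neg_apply]
  show ExteriorAlgebra.ι ℝ a * (ExteriorAlgebra.ι ℝ b * y) = -(ExteriorAlgebra.ι ℝ b * (ExteriorAlgebra.ι ℝ a * y))
  rw [← mul_assoc, ← mul_assoc, eq_neg_iff_add_eq_zero, ← add_mul,
    ExteriorAlgebra.ι_add_mul_swap, zero_mul]

lemma ii2 (a b : V) : (iot a * iot b : Module.End ℝ (ExteriorAlgebra ℝ V)) = -(iot b * iot a) := by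
  apply LinearMap.ext; intro y
  exact CliffordAlgebra.contractLeft_comm _ _ y

lemma eneg_mul (f g : Module.End ℝ (ExteriorAlgebra ℝ V)) : -f * g = -(f * g) := neg_mul f g

lemma emul_neg (f g : Module.End ℝ (ExteriorAlgebra ℝ V)) : f * -g = -(f * g) := mul_neg f g

lemma ee3 (a b : V) (x : Module.End ℝ (ExteriorAlgebra ℝ V)) :
    eps a * (eps b * x) = -(eps b * (eps a * x)) := by
  rw [← mul_assoc, ← mul_assoc, ee2, eneg_mul]

lemma ii3 (a b : V) (x : Module.End ℝ (ExteriorAlgebra ℝ V)) :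
    iot a * (iot b * x) = -(iot b * (iot a * x)) := by
  rw [← mul_assoc, ← mul_assoc, ii2, eneg_mul]

lemma tr_rot (f g h k : Module.End ℝ (ExteriorAlgebra ℝ V)) :
    Tr (f * (g * (h * k))) = Tr (k * (f * (g * h))) := by
  rw [show f * (g * (h * k)) = (f * (g * h)) * k by noncomm_ring]
  exact LinearMap.trace_mul_comm ℝ _ _

lemma tr_comm (f g : Module.End ℝ (ExteriorAlgebra ℝ V)) : Tr (f * g) = Tr (g * f) :=
  LinearMap.trace_mul_comm ℝ f g

lemma tr_ee (a b : V) : Tr (eps a * eps b) = 0 := by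
  have h1 : Tr (eps a * eps b) = -Tr (eps b * eps a) := by rw [ee2]; exact map_neg _ _
  have h2 : Tr (eps a * eps b) = Tr (eps b * eps a) := LinearMap.trace_mul_comm ℝ _ _
  linarith

lemma tr_ii (a b : V) : Tr (iot a * iot b) = 0 := by
  have h1 : Tr (iot a * iot b) = -Tr (iot b * iot a) := by rw [ii2]; exact map_neg _ _
  have h2 : Tr (iot a * iot b) = Tr (iot b * iot a) := LinearMap.trace_mul_comm ℝ _ _
  linarith

lemma tr_ei (a b : V) : Tr (eps b * iot a) = ⟪a, b⟫ / 2 * Tr (V := V) 1 := by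
  have h := congrArg (Tr (V := V)) (swap2 a b)
  simp only [map_sub, map_smul, smul_eq_mul] at h
  have h2 : Tr (iot a * eps b) = Tr (eps b * iot a) := LinearMap.trace_mul_comm ℝ _ _
  linarith

lemma tEEII (a b c d : V) :
    Tr (eps a * (eps b * (iot c * iot d))) =
      (⟪a, d⟫ * ⟪b, c⟫ - ⟪a, c⟫ * ⟪b, d⟫) / 4 * Tr (V := V) 1 := by
  have key : Tr (eps a * (eps b * (iot c * iot d))) =
      ⟪d, a⟫ * Tr (eps b * iot c) - ⟪d, b⟫ * Tr (eps a * iot c)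
        - Tr (eps a * (eps b * (iot c * iot d))) := by
    calc Tr (eps a * (eps b * (iot c * iot d)))
        = Tr (iot d * (eps a * (eps b * iot c))) := tr_rot _ _ _ _
      _ = ⟪d, a⟫ * Tr (eps b * iot c) - Tr (eps a * (iot d * (eps b * iot c))) := by
          rw [swap3]; simp only [map_sub, map_smul, smul_eq_mul]
      _ = ⟪d, a⟫ * Tr (eps b * iot c) -
            (⟪d, b⟫ * Tr (eps a * iot c) - Tr (eps a * (eps b * (iot d * iot c)))) := by
          rw [swap3 d b (iot c), mul_sub, mul_smul_comm]
          simp only [map_sub, map_smul, smul_eq_mul]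
      _ = ⟪d, a⟫ * Tr (eps b * iot c) - ⟪d, b⟫ * Tr (eps a * iot c)
            - Tr (eps a * (eps b * (iot c * iot d))) := by
          rw [ii2 d c, emul_neg, emul_neg, map_neg]; ring
  rw [tr_ei, tr_ei] at key
  simp only [real_inner_comm a b, real_inner_comm a c, real_inner_comm a d,
    real_inner_comm b c, real_inner_comm b d, real_inner_comm c d] at key ⊢
  linarith

lemma tEEEI (a b c d : V) : Tr (eps a * (eps b * (eps c * iot d))) = 0 := by
  have key : Tr (eps a * (eps b * (eps c * iot d))) =
      ⟪d, a⟫ * Tr (eps b * eps c) - ⟪d, b⟫ * Tr (eps a * eps c)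
        + ⟪d, c⟫ * Tr (eps a * eps b)
        - Tr (eps a * (eps b * (eps c * iot d))) := by
    calc Tr (eps a * (eps b * (eps c * iot d)))
        = Tr (iot d * (eps a * (eps b * eps c))) := tr_rot _ _ _ _
      _ = ⟪d, a⟫ * Tr (eps b * eps c) - Tr (eps a * (iot d * (eps b * eps c))) := by
          rw [swap3]; simp only [map_sub, map_smul, smul_eq_mul]
      _ = ⟪d, a⟫ * Tr (eps b * eps c) -
            (⟪d, b⟫ * Tr (eps a * eps c) - Tr (eps a * (eps b * (iot d * eps c)))) := by
          rw [swap3 d b (eps c), mul_sub, mul_smul_comm]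
          simp only [map_sub, map_smul, smul_eq_mul]
      _ = ⟪d, a⟫ * Tr (eps b * eps c) -
            (⟪d, b⟫ * Tr (eps a * eps c) -
              (⟪d, c⟫ * Tr (eps a * eps b) - Tr (eps a * (eps b * (eps c * iot d))))) := by
          rw [swap2 d c, mul_sub, mul_sub, mul_smul_comm, mul_smul_comm, mul_one,
            ← mul_assoc (eps a) (eps b) (eps c * iot d)]
          rw [show eps a * eps b * (eps c * iot d) = eps a * (eps b * (eps c * iot d)) by
            noncomm_ring]
          simp only [map_sub, map_smul, smul_eq_mul]
      _ = _ := by ring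
  rw [tr_ee, tr_ee, tr_ee] at key
  linarith

lemma tEIII (a b c d : V) : Tr (eps a * (iot b * (iot c * iot d))) = 0 := by
  have key : Tr (eps a * (iot b * (iot c * iot d))) =
      ⟪d, a⟫ * Tr (iot b * iot c) - ⟪c, a⟫ * Tr (iot b * iot d)
        + ⟪b, a⟫ * Tr (iot c * iot d)
        - Tr (eps a * (iot b * (iot c * iot d))) := by
    calc Tr (eps a * (iot b * (iot c * iot d)))
        = Tr (iot b * (iot c * (iot d * eps a))) := by
          rw [tr_comm (eps a) (iot b * (iot c * iot d)), mul_assoc, mul_assoc]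
      _ = ⟪d, a⟫ * Tr (iot b * iot c) - Tr (iot b * (iot c * (eps a * iot d))) := by
          rw [swap2 d a, mul_sub, mul_sub, mul_smul_comm, mul_smul_comm, mul_one]
          simp only [map_sub, map_smul, smul_eq_mul]
      _ = ⟪d, a⟫ * Tr (iot b * iot c) -
            (⟪c, a⟫ * Tr (iot b * iot d) - Tr (iot b * (eps a * (iot c * iot d)))) := by
          rw [swap3 c a (iot d), mul_sub, mul_smul_comm]
          simp only [map_sub, map_smul, smul_eq_mul]
      _ = ⟪d, a⟫ * Tr (iot b * iot c) -
            (⟪c, a⟫ * Tr (iot b * iot d) -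
              (⟪b, a⟫ * Tr (iot c * iot d) - Tr (eps a * (iot b * (iot c * iot d))))) := by
          rw [swap3 b a (iot c * iot d)]
          simp only [map_sub, map_smul, smul_eq_mul]
      _ = _ := by ring
  rw [tr_ii, tr_ii, tr_ii] at key
  linarith

lemma tEEEE (a b c d : V) : Tr (eps a * (eps b * (eps c * eps d))) = 0 := by
  have key : Tr (eps a * (eps b * (eps c * eps d))) =
      -Tr (eps a * (eps b * (eps c * eps d))) := by
    calc Tr (eps a * (eps b * (eps c * eps d)))
        = Tr (eps d * (eps a * (eps b * eps c))) := tr_rot _ _ _ _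
      _ = -Tr (eps a * (eps b * (eps c * eps d))) := by
          rw [ee3 d a, map_neg, ee3 d b, emul_neg, map_neg, neg_neg, ee2 d c, emul_neg, emul_neg,
            map_neg]
  linarith

lemma tIIII (a b c d : V) : Tr (iot a * (iot b * (iot c * iot d))) = 0 := by
  have key : Tr (iot a * (iot b * (iot c * iot d))) =
      -Tr (iot a * (iot b * (iot c * iot d))) := by
    calc Tr (iot a * (iot b * (iot c * iot d)))
        = Tr (iot d * (iot a * (iot b * iot c))) := tr_rot _ _ _ _
      _ = -Tr (iot a * (iot b * (iot c * iot d))) := by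
          rw [ii3 d a, map_neg, ii3 d b, emul_neg, map_neg, neg_neg, ii2 d c, emul_neg, emul_neg,
            map_neg]
  linarith

lemma tEEIE (a b c d : V) : Tr (eps a * (eps b * (iot c * eps d))) = 0 := by
  rw [tr_rot]; exact tEEEI d a b c

lemma tEIEE (a b c d : V) : Tr (eps a * (iot b * (eps c * eps d))) = 0 := by
  rw [tr_rot, tr_rot]; exact tEEEI c d a b

lemma tIEEE (a b c d : V) : Tr (iot a * (eps b * (eps c * eps d))) = 0 := by
  rw [tr_rot, tr_rot, tr_rot]; exact tEEEI b c d a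

lemma tIIIE (a b c d : V) : Tr (iot a * (iot b * (iot c * eps d))) = 0 := by
  rw [tr_rot]; exact tEIII d a b c

lemma tIIEI (a b c d : V) : Tr (iot a * (iot b * (eps c * iot d))) = 0 := by
  rw [tr_rot, tr_rot]; exact tEIII c d a b

lemma tIEII (a b c d : V) : Tr (iot a * (eps b * (iot c * iot d))) = 0 := by
  rw [tr_rot, tr_rot, tr_rot]; exact tEIII b c d a

lemma tEIEI (a b c d : V) :
    Tr (eps a * (iot b * (eps c * iot d))) =
      (⟪a, d⟫ * ⟪b, c⟫ + ⟪a, b⟫ * ⟪c, d⟫) / 4 * Tr (V := V) 1 := by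
  rw [swap3 b c (iot d), mul_sub, mul_smul_comm, map_sub, map_smul, smul_eq_mul,
    tr_ei, tEEII]
  simp only [real_inner_comm a b, real_inner_comm a c, real_inner_comm a d,
    real_inner_comm b c, real_inner_comm b d, real_inner_comm c d]
  ring

lemma tEIIE (a b c d : V) :
    Tr (eps a * (iot b * (iot c * eps d))) =
      (⟪a, b⟫ * ⟪c, d⟫ - ⟪a, c⟫ * ⟪b, d⟫) / 4 * Tr (V := V) 1 := by
  rw [tr_rot, tEEII]
  simp only [real_inner_comm a b, real_inner_comm a c, real_inner_comm a d,
    real_inner_comm b c, real_inner_comm b d, real_inner_comm c d]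
  ring

lemma tIEEI (a b c d : V) :
    Tr (iot a * (eps b * (eps c * iot d))) =
      (⟪a, b⟫ * ⟪c, d⟫ - ⟪a, c⟫ * ⟪b, d⟫) / 4 * Tr (V := V) 1 := by
  rw [tr_rot, tr_rot, tr_rot, tEEII]
  simp only [real_inner_comm a b, real_inner_comm a c, real_inner_comm a d,
    real_inner_comm b c, real_inner_comm b d, real_inner_comm c d]
  ring

lemma tIEIE (a b c d : V) :
    Tr (iot a * (eps b * (iot c * eps d))) =
      (⟪a, b⟫ * ⟪c, d⟫ + ⟪a, d⟫ * ⟪b, c⟫) / 4 * Tr (V := V) 1 := by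
  rw [tr_rot, tr_rot, tr_rot, tEIEI]
  simp only [real_inner_comm a b, real_inner_comm a c, real_inner_comm a d,
    real_inner_comm b c, real_inner_comm b d, real_inner_comm c d]
  ring

lemma tIIEE (a b c d : V) :
    Tr (iot a * (iot b * (eps c * eps d))) =
      (⟪a, d⟫ * ⟪b, c⟫ - ⟪a, c⟫ * ⟪b, d⟫) / 4 * Tr (V := V) 1 := by
  rw [tr_rot, tr_rot, tEEII]
  simp only [real_inner_comm a b, real_inner_comm a c, real_inner_comm a d,
    real_inner_comm b c, real_inner_comm b d, real_inner_comm c d]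
  ring

end Aux

theorem statement_2 {V : Type*} [NormedAddCommGroup V] [InnerProductSpace ℝ V]
    [FiniteDimensional ℝ V] (a₀ b₀ : ℝ) (u v w X : V) :
    LinearMap.trace ℝ (ExteriorAlgebra ℝ V) (ctil a₀ b₀ u * ctil a₀ b₀ v * ctil a₀ b₀ w * cmap X) =
      a₀ * b₀ * (a₀ + b₀) / 2 * (⟪u, X⟫ * ⟪v, w⟫ - ⟪v, X⟫ * ⟪u, w⟫ + ⟪w, X⟫ * ⟪u, v⟫) * LinearMap.trace ℝ (ExteriorAlgebra ℝ V) 1 := by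
  show Tr (ctil a₀ b₀ u * ctil a₀ b₀ v * ctil a₀ b₀ w * cmap X) = _ * Tr 1
  simp only [ctil, cmap, sub_mul, mul_sub, smul_mul_assoc, mul_smul_comm, smul_smul,
    map_sub, map_smul, smul_eq_mul, mul_assoc]
  rw [tEEEE, tEEEI, tEEIE, tEEII, tEIEE, tEIEI, tEIIE, tEIII,
    tIEEE, tIEEI, tIEIE, tIEII, tIIEE, tIIEI, tIIIE, tIIII]
  rw [real_inner_comm X u, real_inner_comm X v, real_inner_comm X w,
    real_inner_comm v u, real_inner_comm w u, real_inner_comm w v]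
  ring
end

section
/- For all vectors ξ, X in V, the following identity of endomorphisms of ΛV holds: ε(ξ)∘ι(ξ) ∘ (c̄(ξ)∘c(X) + c(X)∘c̃(ξ)) = (a₀−b₀)·|ξ|²·(ξ(X)·Id + c(X)∘ε(ξ)) − (a₀+b₀)·ξ(X)·ε(ξ)∘ι(ξ). -/
open scoped RealInnerProductSpace

section aux

variable {V : Type*} [NormedAddCommGroup V] [InnerProductSpace ℝ V]

lemma eps_mul_eps (v w : V) : eps v * eps w = -(eps w * eps v) := by
  refine LinearMap.ext fun x => ?_
  show ExteriorAlgebra.ι ℝ v * (ExteriorAlgebra.ι ℝ w * x) =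
    -(ExteriorAlgebra.ι ℝ w * (ExteriorAlgebra.ι ℝ v * x))
  rw [← mul_assoc, ← mul_assoc, eq_neg_iff_add_eq_zero, ← add_mul,
    ExteriorAlgebra.ι_add_mul_swap, zero_mul]

lemma eps_mul_self (v : V) : eps v * eps v = 0 := by
  refine LinearMap.ext fun x => ?_
  show ExteriorAlgebra.ι ℝ v * (ExteriorAlgebra.ι ℝ v * x) = 0
  rw [← mul_assoc, ExteriorAlgebra.ι_sq_zero, zero_mul]

lemma iot_mul_iot (v w : V) : iot v * iot w = -(iot w * iot v) := by
  refine LinearMap.ext fun x => ?_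
  exact CliffordAlgebra.contractLeft_comm _ _ x

lemma iot_mul_self (v : V) : iot v * iot v = 0 := by
  refine LinearMap.ext fun x => ?_
  exact CliffordAlgebra.contractLeft_contractLeft _ x

lemma iot_mul_eps (v w : V) : iot v * eps w = ⟪v, w⟫ • 1 - eps w * iot v := by
  refine LinearMap.ext fun x => ?_
  show CliffordAlgebra.contractLeft (innerₛₗ ℝ v) (ExteriorAlgebra.ι ℝ w * x) =
    ⟪v, w⟫ • x - ExteriorAlgebra.ι ℝ w * CliffordAlgebra.contractLeft (innerₛₗ ℝ v) x
  exact CliffordAlgebra.contractLeft_ι_mul (Q := 0) (innerₛₗ ℝ v) w x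

end aux

theorem statement_9 {V : Type*} [NormedAddCommGroup V] [InnerProductSpace ℝ V]
    [FiniteDimensional ℝ V] (a₀ b₀ : ℝ) (ξ X : V) :
    eps ξ * iot ξ * (cbar a₀ b₀ ξ * cmap X + cmap X * ctil a₀ b₀ ξ) =
      ((a₀ - b₀) * ⟪ξ, ξ⟫) • (⟪ξ, X⟫ • (1 : Module.End ℝ (ExteriorAlgebra ℝ V)) + cmap X * eps ξ) -
        ((a₀ + b₀) * ⟪ξ, X⟫) • (eps ξ * iot ξ) := by
  set E := eps ξ
  set I := iot ξ
  set F := eps X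
  set J := iot X
  set s : ℝ := ⟪ξ, ξ⟫
  set t : ℝ := ⟪ξ, X⟫
  have hFE : F * E = -(E * F) := eps_mul_eps X ξ
  have hIE : I * E = s • 1 - E * I := iot_mul_eps ξ ξ
  have hIF : I * F = t • 1 - F * I := iot_mul_eps ξ X
  have hJE : J * E = t • 1 - E * J := by
    rw [show t = ⟪X, ξ⟫ from real_inner_comm X ξ]
    exact iot_mul_eps X ξ
  have hJI : J * I = -(I * J) := iot_mul_iot X ξ
  have hEE : E * E = 0 := eps_mul_self ξ
  have hII : I * I = 0 := iot_mul_self ξ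
  have hIE' : ∀ x, I * (E * x) = s • x - E * (I * x) := fun x => by
    rw [← mul_assoc, hIE, sub_mul, smul_mul_assoc, one_mul, mul_assoc]
  have hFE' : ∀ x, F * (E * x) = -(E * (F * x)) := fun x => by
    rw [← mul_assoc, hFE]; exact (neg_mul (E * F) x).trans (by rw [mul_assoc])
  have hJE' : ∀ x, J * (E * x) = t • x - E * (J * x) := fun x => by
    rw [← mul_assoc, hJE, sub_mul, smul_mul_assoc, one_mul, mul_assoc]
  have hJI' : ∀ x, J * (I * x) = -(I * (J * x)) := fun x => by
    rw [← mul_assoc, hJI]; exact (neg_mul (I * J) x).trans (by rw [mul_assoc])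
  have hIF' : ∀ x, I * (F * x) = t • x - F * (I * x) := fun x => by
    rw [← mul_assoc, hIF, sub_mul, smul_mul_assoc, one_mul, mul_assoc]
  have hEE' : ∀ x, E * (E * x) = 0 := fun x => by rw [← mul_assoc, hEE, zero_mul]
  have hII' : ∀ x, I * (I * x) = 0 := fun x => by rw [← mul_assoc, hII, zero_mul]
  rw [show cbar a₀ b₀ ξ = b₀ • E - a₀ • I from rfl, show ctil a₀ b₀ ξ = a₀ • E - b₀ • I from rfl,
    show cmap X = F - J from rfl]
  simp only [cbar, ctil, cmap, mul_add, add_mul, mul_sub, sub_mul, smul_mul_assoc,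
    mul_smul_comm, mul_assoc, mul_one, hIE', hFE', hJE', hJI', hIF', hEE', hII',
    hIE, hFE, hJE, hJI, hEE, hII, smul_sub, smul_add, smul_neg, smul_smul, smul_zero,
    mul_zero, sub_zero, zero_sub, neg_neg, mul_neg, neg_zero]
  simp only [← neg_one_smul ℝ (M := Module.End ℝ (ExteriorAlgebra ℝ V)), mul_add, add_mul, mul_sub,
    sub_mul, smul_mul_assoc, mul_smul_comm, mul_assoc, hIE', hFE', hJE', hJI', hIF', hEE', hII',
    smul_sub, smul_add, smul_smul, smul_zero, mul_zero, sub_zero, zero_sub]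
  module
end

section
/- For all vectors u, v, w, ξ, X in V, the trace of the composite endomorphism c̃(u)∘c̃(v)∘c̃(w)∘c̃(ξ)∘c(X)∘ι(ξ) of ΛV equals (a₀²b₀(a₀+3b₀)/4)·ξ(X)·A·Tr(Id) − (a₀²b₀(a₀+b₀)/4)·|ξ|²·B·Tr(Id), where A = ξ(u)g(v,w) − ξ(v)g(u,w) + ξ(w)g(u,v) and B = g(X,u)g(v,w) − g(X,v)g(u,w) + g(X,w)g(u,v). -/
open scoped RealInnerProductSpace

section TraceHelpers

open LinearMap

variable {M : Type*} [AddCommGroup M] [Module ℝ M]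

lemma trace_two' (A B : Module.End ℝ M) (κ : ℝ) (h : A * B + B * A = κ • 1) :
    trace ℝ M (A * B) = κ / 2 * trace ℝ M 1 := by
  have h' := congrArg (trace ℝ M) h
  rw [map_add, map_smul, trace_mul_comm ℝ B A, smul_eq_mul] at h'
  linarith

lemma trace_four' (g₁ g₂ g₃ g₄ : Module.End ℝ M)
    (k₁₂ k₁₃ k₁₄ k₂₃ k₂₄ k₃₄ : ℝ)
    (h₁₂ : g₁ * g₂ + g₂ * g₁ = k₁₂ • 1)
    (h₁₃ : g₁ * g₃ + g₃ * g₁ = k₁₃ • 1)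
    (h₁₄ : g₁ * g₄ + g₄ * g₁ = k₁₄ • 1)
    (h₂₃ : g₂ * g₃ + g₃ * g₂ = k₂₃ • 1)
    (h₂₄ : g₂ * g₄ + g₄ * g₂ = k₂₄ • 1)
    (h₃₄ : g₃ * g₄ + g₄ * g₃ = k₃₄ • 1) :
    trace ℝ M (g₁ * g₂ * g₃ * g₄) =
      (k₁₂ * k₃₄ - k₁₃ * k₂₄ + k₁₄ * k₂₃) / 4 * trace ℝ M 1 := by
  have key : g₁ * g₂ * g₃ * g₄ + g₂ * g₃ * g₄ * g₁ =
      (g₁ * g₂ + g₂ * g₁) * (g₃ * g₄) - g₂ * ((g₁ * g₃ + g₃ * g₁) * g₄)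
        + g₂ * (g₃ * (g₁ * g₄ + g₄ * g₁)) := by
    noncomm_ring
  rw [h₁₂, h₁₃, h₁₄] at key
  have key' : g₁ * g₂ * g₃ * g₄ + g₂ * g₃ * g₄ * g₁ =
      k₁₂ • (g₃ * g₄) - k₁₃ • (g₂ * g₄) + k₁₄ • (g₂ * g₃) := by
    rw [key]; simp only [smul_mul_assoc, one_mul, mul_smul_comm, mul_one]
  have t := congrArg (trace ℝ M) key'
  rw [map_add, map_add, map_sub, map_smul, map_smul, map_smul,
    trace_mul_comm ℝ (g₂ * g₃ * g₄) g₁, show g₁ * (g₂ * g₃ * g₄) = g₁ * g₂ * g₃ * g₄ by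
      noncomm_ring, smul_eq_mul, smul_eq_mul, smul_eq_mul,
    trace_two' g₃ g₄ k₃₄ h₃₄, trace_two' g₂ g₄ k₂₄ h₂₄, trace_two' g₂ g₃ k₂₃ h₂₃] at t
  linarith

lemma trace_six' (g₁ g₂ g₃ g₄ g₅ g₆ : Module.End ℝ M)
    (k₁₂ k₁₃ k₁₄ k₁₅ k₁₆ k₂₃ k₂₄ k₂₅ k₂₆ k₃₄ k₃₅ k₃₆ k₄₅ k₄₆ k₅₆ : ℝ)
    (h₁₂ : g₁ * g₂ + g₂ * g₁ = k₁₂ • 1)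
    (h₁₃ : g₁ * g₃ + g₃ * g₁ = k₁₃ • 1)
    (h₁₄ : g₁ * g₄ + g₄ * g₁ = k₁₄ • 1)
    (h₁₅ : g₁ * g₅ + g₅ * g₁ = k₁₅ • 1)
    (h₁₆ : g₁ * g₆ + g₆ * g₁ = k₁₆ • 1)
    (h₂₃ : g₂ * g₃ + g₃ * g₂ = k₂₃ • 1)
    (h₂₄ : g₂ * g₄ + g₄ * g₂ = k₂₄ • 1)
    (h₂₅ : g₂ * g₅ + g₅ * g₂ = k₂₅ • 1)
    (h₂₆ : g₂ * g₆ + g₆ * g₂ = k₂₆ • 1)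
    (h₃₄ : g₃ * g₄ + g₄ * g₃ = k₃₄ • 1)
    (h₃₅ : g₃ * g₅ + g₅ * g₃ = k₃₅ • 1)
    (h₃₆ : g₃ * g₆ + g₆ * g₃ = k₃₆ • 1)
    (h₄₅ : g₄ * g₅ + g₅ * g₄ = k₄₅ • 1)
    (h₄₆ : g₄ * g₆ + g₆ * g₄ = k₄₆ • 1)
    (h₅₆ : g₅ * g₆ + g₆ * g₅ = k₅₆ • 1) :
    trace ℝ M (g₁ * g₂ * g₃ * g₄ * g₅ * g₆) =
      (k₁₂ * (k₃₄ * k₅₆ - k₃₅ * k₄₆ + k₃₆ * k₄₅)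
        - k₁₃ * (k₂₄ * k₅₆ - k₂₅ * k₄₆ + k₂₆ * k₄₅)
        + k₁₄ * (k₂₃ * k₅₆ - k₂₅ * k₃₆ + k₂₆ * k₃₅)
        - k₁₅ * (k₂₃ * k₄₆ - k₂₄ * k₃₆ + k₂₆ * k₃₄)
        + k₁₆ * (k₂₃ * k₄₅ - k₂₄ * k₃₅ + k₂₅ * k₃₄)) / 8 * trace ℝ M 1 := by
  have key : g₁ * g₂ * g₃ * g₄ * g₅ * g₆ + g₂ * g₃ * g₄ * g₅ * g₆ * g₁ =
      (g₁ * g₂ + g₂ * g₁) * (g₃ * g₄ * g₅ * g₆)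
        - g₂ * ((g₁ * g₃ + g₃ * g₁) * (g₄ * g₅ * g₆))
        + g₂ * (g₃ * ((g₁ * g₄ + g₄ * g₁) * (g₅ * g₆)))
        - g₂ * (g₃ * (g₄ * ((g₁ * g₅ + g₅ * g₁) * g₆)))
        + g₂ * (g₃ * (g₄ * (g₅ * (g₁ * g₆ + g₆ * g₁)))) := by
    noncomm_ring
  rw [h₁₂, h₁₃, h₁₄, h₁₅, h₁₆] at key
  have key' : g₁ * g₂ * g₃ * g₄ * g₅ * g₆ + g₂ * g₃ * g₄ * g₅ * g₆ * g₁ =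
      k₁₂ • (g₃ * g₄ * g₅ * g₆) - k₁₃ • (g₂ * g₄ * g₅ * g₆) + k₁₄ • (g₂ * g₃ * g₅ * g₆)
        - k₁₅ • (g₂ * g₃ * g₄ * g₆) + k₁₆ • (g₂ * g₃ * g₄ * g₅) := by
    rw [key]; simp only [smul_mul_assoc, one_mul, mul_smul_comm, mul_one]; noncomm_ring
  have t := congrArg (trace ℝ M) key'
  simp only [map_add, map_sub, map_smul, smul_eq_mul] at t
  rw [trace_mul_comm ℝ (g₂ * g₃ * g₄ * g₅ * g₆) g₁,
    show g₁ * (g₂ * g₃ * g₄ * g₅ * g₆) = g₁ * g₂ * g₃ * g₄ * g₅ * g₆ by noncomm_ring,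
    trace_four' g₃ g₄ g₅ g₆ _ _ _ _ _ _ h₃₄ h₃₅ h₃₆ h₄₅ h₄₆ h₅₆,
    trace_four' g₂ g₄ g₅ g₆ _ _ _ _ _ _ h₂₄ h₂₅ h₂₆ h₄₅ h₄₆ h₅₆,
    trace_four' g₂ g₃ g₅ g₆ _ _ _ _ _ _ h₂₃ h₂₅ h₂₆ h₃₅ h₃₆ h₅₆,
    trace_four' g₂ g₃ g₄ g₆ _ _ _ _ _ _ h₂₃ h₂₄ h₂₆ h₃₄ h₃₆ h₄₆,
    trace_four' g₂ g₃ g₄ g₅ _ _ _ _ _ _ h₂₃ h₂₄ h₂₅ h₃₄ h₃₅ h₄₅] at t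
  linarith

end TraceHelpers

section Relations

variable {V : Type*} [NormedAddCommGroup V] [InnerProductSpace ℝ V]

lemma eps_anti (x y : V) : eps x * eps y + eps y * eps x = 0 := by
  refine LinearMap.ext fun m => ?_
  simp only [eps, LinearMap.add_apply, Module.End.mul_apply, LinearMap.mulLeft_apply,
    LinearMap.zero_apply]
  rw [← mul_assoc, ← mul_assoc, ← add_mul, ExteriorAlgebra.ι_add_mul_swap, zero_mul]

lemma iot_anti (x y : V) : iot x * iot y + iot y * iot x = 0 := by
  refine LinearMap.ext fun m => ?_
  simp only [iot, LinearMap.add_apply, Module.End.mul_apply, LinearMap.zero_apply]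
  rw [CliffordAlgebra.contractLeft_comm]
  abel

lemma iot_eps (x y : V) : iot y * eps x + eps x * iot y = (⟪y, x⟫ : ℝ) • 1 := by
  refine LinearMap.ext fun m => ?_
  simp only [eps, iot, LinearMap.add_apply, Module.End.mul_apply, LinearMap.mulLeft_apply,
    LinearMap.smul_apply, Module.End.one_apply, CliffordAlgebra.contractLeft_ι_mul,
    innerₛₗ_apply_apply]
  abel

lemma anti_gen (α β γ δ : ℝ) (x y : V) :
    (α • eps x + β • iot x) * (γ • eps y + δ • iot y)
      + (γ • eps y + δ • iot y) * (α • eps x + β • iot x)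
      = (α * δ * ⟪y, x⟫ + β * γ * ⟪x, y⟫) • (1 : Module.End ℝ (ExteriorAlgebra ℝ V)) := by
  have h1 := eps_anti x y
  have h2 := iot_anti x y
  have h3 := iot_eps x y
  have h4 := iot_eps y x
  have key : (α • eps x + β • iot x) * (γ • eps y + δ • iot y)
      + (γ • eps y + δ • iot y) * (α • eps x + β • iot x)
      = (α * γ) • (eps x * eps y + eps y * eps x)
        + (β * δ) • (iot x * iot y + iot y * iot x)
        + (α * δ) • (iot y * eps x + eps x * iot y)
        + (β * γ) • (iot x * eps y + eps y * iot x) := by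
    simp only [add_mul, mul_add, smul_mul_assoc, mul_smul_comm, smul_add, smul_smul]
    module
  rw [key, h1, h2, h3, h4]
  simp only [smul_zero, smul_smul, zero_add, add_zero]
  module

end Relations

theorem statement_11 {V : Type*} [NormedAddCommGroup V] [InnerProductSpace ℝ V]
    [FiniteDimensional ℝ V] (a₀ b₀ : ℝ) (u v w ξ X : V) :
    LinearMap.trace ℝ (ExteriorAlgebra ℝ V) (ctil a₀ b₀ u * ctil a₀ b₀ v * ctil a₀ b₀ w * ctil a₀ b₀ ξ * cmap X * iot ξ) =
      a₀ ^ 2 * b₀ * (a₀ + 3 * b₀) / 4 * ⟪ξ, X⟫ * (⟪ξ, u⟫ * ⟪v, w⟫ - ⟪ξ, v⟫ * ⟪u, w⟫ + ⟪ξ, w⟫ * ⟪u, v⟫) * LinearMap.trace ℝ (ExteriorAlgebra ℝ V) 1 -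
        a₀ ^ 2 * b₀ * (a₀ + b₀) / 4 * ⟪ξ, ξ⟫ * (⟪X, u⟫ * ⟪v, w⟫ - ⟪X, v⟫ * ⟪u, w⟫ + ⟪X, w⟫ * ⟪u, v⟫) * LinearMap.trace ℝ (ExteriorAlgebra ℝ V) 1 := by
  have hc : ∀ z : V, ctil a₀ b₀ z = a₀ • eps z + (-b₀) • iot z := fun z => by
    rw [ctil]; module
  have hm : cmap X = (1 : ℝ) • eps X + (-1 : ℝ) • iot X := by
    rw [cmap]; module
  have hi : iot ξ = (0 : ℝ) • eps ξ + (1 : ℝ) • iot ξ := by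
    rw [zero_smul, one_smul, zero_add]
  have H₁₂ : ctil a₀ b₀ u * ctil a₀ b₀ v + ctil a₀ b₀ v * ctil a₀ b₀ u
      = (a₀ * -b₀ * ⟪v, u⟫ + -b₀ * a₀ * ⟪u, v⟫) • 1 := by
    rw [hc u, hc v]; exact anti_gen a₀ (-b₀) a₀ (-b₀) u v
  have H₁₃ : ctil a₀ b₀ u * ctil a₀ b₀ w + ctil a₀ b₀ w * ctil a₀ b₀ u
      = (a₀ * -b₀ * ⟪w, u⟫ + -b₀ * a₀ * ⟪u, w⟫) • 1 := by
    rw [hc u, hc w]; exact anti_gen a₀ (-b₀) a₀ (-b₀) u w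
  have H₁₄ : ctil a₀ b₀ u * ctil a₀ b₀ ξ + ctil a₀ b₀ ξ * ctil a₀ b₀ u
      = (a₀ * -b₀ * ⟪ξ, u⟫ + -b₀ * a₀ * ⟪u, ξ⟫) • 1 := by
    rw [hc u, hc ξ]; exact anti_gen a₀ (-b₀) a₀ (-b₀) u ξ
  have H₁₅ : ctil a₀ b₀ u * cmap X + cmap X * ctil a₀ b₀ u
      = (a₀ * -1 * ⟪X, u⟫ + -b₀ * 1 * ⟪u, X⟫) • 1 := by
    rw [hc u, hm]; exact anti_gen a₀ (-b₀) 1 (-1) u X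
  have H₁₆ : ctil a₀ b₀ u * iot ξ + iot ξ * ctil a₀ b₀ u
      = (a₀ * 1 * ⟪ξ, u⟫ + -b₀ * 0 * ⟪u, ξ⟫) • 1 := by
    rw [hc u, hi]; exact anti_gen a₀ (-b₀) 0 1 u ξ
  have H₂₃ : ctil a₀ b₀ v * ctil a₀ b₀ w + ctil a₀ b₀ w * ctil a₀ b₀ v
      = (a₀ * -b₀ * ⟪w, v⟫ + -b₀ * a₀ * ⟪v, w⟫) • 1 := by
    rw [hc v, hc w]; exact anti_gen a₀ (-b₀) a₀ (-b₀) v w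
  have H₂₄ : ctil a₀ b₀ v * ctil a₀ b₀ ξ + ctil a₀ b₀ ξ * ctil a₀ b₀ v
      = (a₀ * -b₀ * ⟪ξ, v⟫ + -b₀ * a₀ * ⟪v, ξ⟫) • 1 := by
    rw [hc v, hc ξ]; exact anti_gen a₀ (-b₀) a₀ (-b₀) v ξ
  have H₂₅ : ctil a₀ b₀ v * cmap X + cmap X * ctil a₀ b₀ v
      = (a₀ * -1 * ⟪X, v⟫ + -b₀ * 1 * ⟪v, X⟫) • 1 := by
    rw [hc v, hm]; exact anti_gen a₀ (-b₀) 1 (-1) v X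
  have H₂₆ : ctil a₀ b₀ v * iot ξ + iot ξ * ctil a₀ b₀ v
      = (a₀ * 1 * ⟪ξ, v⟫ + -b₀ * 0 * ⟪v, ξ⟫) • 1 := by
    rw [hc v, hi]; exact anti_gen a₀ (-b₀) 0 1 v ξ
  have H₃₄ : ctil a₀ b₀ w * ctil a₀ b₀ ξ + ctil a₀ b₀ ξ * ctil a₀ b₀ w
      = (a₀ * -b₀ * ⟪ξ, w⟫ + -b₀ * a₀ * ⟪w, ξ⟫) • 1 := by
    rw [hc w, hc ξ]; exact anti_gen a₀ (-b₀) a₀ (-b₀) w ξ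
  have H₃₅ : ctil a₀ b₀ w * cmap X + cmap X * ctil a₀ b₀ w
      = (a₀ * -1 * ⟪X, w⟫ + -b₀ * 1 * ⟪w, X⟫) • 1 := by
    rw [hc w, hm]; exact anti_gen a₀ (-b₀) 1 (-1) w X
  have H₃₆ : ctil a₀ b₀ w * iot ξ + iot ξ * ctil a₀ b₀ w
      = (a₀ * 1 * ⟪ξ, w⟫ + -b₀ * 0 * ⟪w, ξ⟫) • 1 := by
    rw [hc w, hi]; exact anti_gen a₀ (-b₀) 0 1 w ξ
  have H₄₅ : ctil a₀ b₀ ξ * cmap X + cmap X * ctil a₀ b₀ ξ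
      = (a₀ * -1 * ⟪X, ξ⟫ + -b₀ * 1 * ⟪ξ, X⟫) • 1 := by
    rw [hc ξ, hm]; exact anti_gen a₀ (-b₀) 1 (-1) ξ X
  have H₄₆ : ctil a₀ b₀ ξ * iot ξ + iot ξ * ctil a₀ b₀ ξ
      = (a₀ * 1 * ⟪ξ, ξ⟫ + -b₀ * 0 * ⟪ξ, ξ⟫) • 1 := by
    have h := anti_gen a₀ (-b₀) 0 1 ξ ξ
    rw [← hi, ← hc ξ] at h; exact h
  have H₅₆ : cmap X * iot ξ + iot ξ * cmap X
      = (1 * 1 * ⟪ξ, X⟫ + -1 * 0 * ⟪X, ξ⟫) • 1 := by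
    rw [hm, hi]; exact anti_gen 1 (-1) 0 1 X ξ
  rw [trace_six' _ _ _ _ _ _ _ _ _ _ _ _ _ _ _ _ _ _ _ _ _
    H₁₂ H₁₃ H₁₄ H₁₅ H₁₆ H₂₃ H₂₄ H₂₅ H₂₆ H₃₄ H₃₅ H₃₆ H₄₅ H₄₆ H₅₆]
  simp only [real_inner_comm v u, real_inner_comm w u, real_inner_comm w v,
    real_inner_comm u ξ, real_inner_comm v ξ, real_inner_comm w ξ,
    real_inner_comm u X, real_inner_comm v X, real_inner_comm w X,
    real_inner_comm X ξ]
  ring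
end

section
/- For all vectors u, v, w, ξ, X in V, the trace of the composite endomorphism c̃(u)∘c̃(v)∘c̃(w)∘c̃(ξ)∘(c̄(ξ)∘c(X) + c(X)∘c̃(ξ)) of ΛV equals [ (a₀b₀(a₀+b₀)(a₀−b₀)²/4)·(ξ(X)·A − |ξ|²·B) − a₀²b₀²(a₀+b₀)·ξ(X)·A ]·Tr(Id), where A = ξ(u)g(v,w) − ξ(v)g(u,w) + ξ(w)g(u,v) and B = g(X,u)g(v,w) − g(X,v)g(u,w) + g(X,w)g(u,v). -/
open scoped RealInnerProductSpace

section generic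

variable {M : Type*} [AddCommGroup M] [Module ℝ M]

local notation "tr" => LinearMap.trace ℝ M

private lemma trace_swap (P A X Q : Module.End ℝ M) (β : ℝ) (h : A * X + X * A = β • 1) :
    tr (P * (A * (X * Q))) = β * tr (P * Q) - tr (P * (X * (A * Q))) := by
  have h' : A * X = β • 1 - X * A := eq_sub_of_add_eq h
  have e : P * (A * (X * Q)) = β • (P * Q) - P * (X * (A * Q)) := by
    rw [show A * (X * Q) = A * X * Q by rw [mul_assoc], h']
    simp only [sub_mul, smul_mul_assoc, one_mul, mul_sub, mul_smul_comm, mul_assoc]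
  rw [e, map_sub, map_smul, smul_eq_mul]

private lemma tr2 {A B : Module.End ℝ M} {β : ℝ} (h : A * B + B * A = β • 1) :
    tr (A * B) = β / 2 * tr 1 := by
  have e := congrArg tr h
  rw [map_add, show tr (B * A) = tr (A * B) from LinearMap.trace_mul_comm ℝ B A,
    map_smul, smul_eq_mul] at e
  linarith

private lemma tr4 {A B C D : Module.End ℝ M} {βab βac βad βbc βbd βcd : ℝ}
    (hab : A * B + B * A = βab • 1) (hac : A * C + C * A = βac • 1)
    (had : A * D + D * A = βad • 1) (hbc : B * C + C * B = βbc • 1)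
    (hbd : B * D + D * B = βbd • 1) (hcd : C * D + D * C = βcd • 1) :
    tr (A * (B * (C * D))) = (βab * βcd - βac * βbd + βad * βbc) / 4 * tr 1 := by
  have s1 := trace_swap 1 A B (C * D) βab hab
  have s2 := trace_swap B A C D βac hac
  have s3 := trace_swap (B * C) A D 1 βad had
  have cyc := LinearMap.trace_mul_comm ℝ (B * (C * D)) A
  simp only [mul_assoc, one_mul, mul_one] at s1 s2 s3 cyc
  have t1 := tr2 hcd
  have t2 := tr2 hbd
  have t3 := tr2 hbc
  linear_combination (s1 - s2 + s3 - cyc) / 2 + βab / 2 * t1 - βac / 2 * t2 + βad / 2 * t3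

private lemma tr6 {A B C D E F : Module.End ℝ M}
    {βab βac βad βae βaf βbc βbd βbe βbf βcd βce βcf βde βdf βef : ℝ}
    (hab : A * B + B * A = βab • 1) (hac : A * C + C * A = βac • 1)
    (had : A * D + D * A = βad • 1) (hae : A * E + E * A = βae • 1)
    (haf : A * F + F * A = βaf • 1) (hbc : B * C + C * B = βbc • 1)
    (hbd : B * D + D * B = βbd • 1) (hbe : B * E + E * B = βbe • 1)
    (hbf : B * F + F * B = βbf • 1) (hcd : C * D + D * C = βcd • 1)
    (hce : C * E + E * C = βce • 1) (hcf : C * F + F * C = βcf • 1)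
    (hde : D * E + E * D = βde • 1) (hdf : D * F + F * D = βdf • 1)
    (hef : E * F + F * E = βef • 1) :
    tr (A * (B * (C * (D * (E * F))))) =
      (βab * (βcd * βef - βce * βdf + βcf * βde)
        - βac * (βbd * βef - βbe * βdf + βbf * βde)
        + βad * (βbc * βef - βbe * βcf + βbf * βce)
        - βae * (βbc * βdf - βbd * βcf + βbf * βcd)
        + βaf * (βbc * βde - βbd * βce + βbe * βcd)) / 8 * tr 1 := by
  have s1 := trace_swap 1 A B (C * (D * (E * F))) βab hab
  have s2 := trace_swap B A C (D * (E * F)) βac hac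
  have s3 := trace_swap (B * C) A D (E * F) βad had
  have s4 := trace_swap (B * (C * D)) A E F βae hae
  have s5 := trace_swap (B * (C * (D * E))) A F 1 βaf haf
  have cyc := LinearMap.trace_mul_comm ℝ (B * (C * (D * (E * F)))) A
  simp only [mul_assoc, one_mul, mul_one] at s1 s2 s3 s4 s5 cyc
  have t1 := tr4 hcd hce hcf hde hdf hef
  have t2 := tr4 hbd hbe hbf hde hdf hef
  have t3 := tr4 hbc hbe hbf hce hcf hef
  have t4 := tr4 hbc hbd hbf hcd hcf hdf
  have t5 := tr4 hbc hbd hbe hcd hce hde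
  linear_combination (s1 - s2 + s3 - s4 + s5 - cyc) / 2
    + βab / 2 * t1 - βac / 2 * t2 + βad / 2 * t3 - βae / 2 * t4 + βaf / 2 * t5

end generic

section exterior

variable {V : Type*} [NormedAddCommGroup V] [InnerProductSpace ℝ V]

private lemma eps_mul_eps_s13 (x y : V) :
    eps x * eps y + eps y * eps x = (0 : Module.End ℝ (ExteriorAlgebra ℝ V)) := by
  apply LinearMap.ext; intro z
  simp only [LinearMap.add_apply, Module.End.mul_apply, LinearMap.zero_apply, eps,
    LinearMap.mulLeft_apply, ← mul_assoc, ← add_mul]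
  rw [ExteriorAlgebra.ι_add_mul_swap, zero_mul]

private lemma iot_mul_iot_s13 (x y : V) :
    iot x * iot y + iot y * iot x = (0 : Module.End ℝ (ExteriorAlgebra ℝ V)) := by
  apply LinearMap.ext; intro z
  simp only [LinearMap.add_apply, Module.End.mul_apply, LinearMap.zero_apply, iot]
  rw [CliffordAlgebra.contractLeft_comm]
  simp

private lemma eps_mul_iot (x y : V) :
    eps x * iot y + iot y * eps x
      = (⟪y, x⟫ : ℝ) • (1 : Module.End ℝ (ExteriorAlgebra ℝ V)) := by
  apply LinearMap.ext; intro z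
  simp only [LinearMap.add_apply, Module.End.mul_apply, LinearMap.smul_apply, Module.End.one_apply,
    eps, iot, LinearMap.mulLeft_apply]
  rw [CliffordAlgebra.contractLeft_ι_mul]
  simp [innerₛₗ_apply_apply]

private lemma gen_anti (p q r s : ℝ) (x y : V) :
    (p • eps x - q • iot x) * (r • eps y - s • iot y) +
      (r • eps y - s • iot y) * (p • eps x - q • iot x) =
      (-(p * s + q * r) * ⟪x, y⟫) • (1 : Module.End ℝ (ExteriorAlgebra ℝ V)) := by
  have h1 : eps y * eps x = -(eps x * eps y) := eq_neg_of_add_eq_zero_right (eps_mul_eps_s13 x y)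
  have h2 : iot y * iot x = -(iot x * iot y) := eq_neg_of_add_eq_zero_right (iot_mul_iot_s13 x y)
  have h3 : iot y * eps x = (⟪y, x⟫ : ℝ) • 1 - eps x * iot y := eq_sub_of_add_eq' (eps_mul_iot x y)
  have h4 : eps y * iot x = (⟪x, y⟫ : ℝ) • 1 - iot x * eps y := eq_sub_of_add_eq (eps_mul_iot y x)
  simp only [sub_mul, mul_sub, smul_mul_assoc, mul_smul_comm, h1, h2, h3, h4,
    real_inner_comm y x]
  module

end exterior

theorem statement_13 {V : Type*} [NormedAddCommGroup V] [InnerProductSpace ℝ V]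
    [FiniteDimensional ℝ V] (a₀ b₀ : ℝ) (u v w ξ X : V) :
    LinearMap.trace ℝ (ExteriorAlgebra ℝ V) (ctil a₀ b₀ u * ctil a₀ b₀ v * ctil a₀ b₀ w * ctil a₀ b₀ ξ * (cbar a₀ b₀ ξ * cmap X + cmap X * ctil a₀ b₀ ξ)) =
      (a₀ * b₀ * (a₀ + b₀) * (a₀ - b₀) ^ 2 / 4 * (⟪ξ, X⟫ * (⟪ξ, u⟫ * ⟪v, w⟫ - ⟪ξ, v⟫ * ⟪u, w⟫ + ⟪ξ, w⟫ * ⟪u, v⟫) - ⟪ξ, ξ⟫ * (⟪X, u⟫ * ⟪v, w⟫ - ⟪X, v⟫ * ⟪u, w⟫ + ⟪X, w⟫ * ⟪u, v⟫)) -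
        a₀ ^ 2 * b₀ ^ 2 * (a₀ + b₀) * ⟪ξ, X⟫ * (⟪ξ, u⟫ * ⟪v, w⟫ - ⟪ξ, v⟫ * ⟪u, w⟫ + ⟪ξ, w⟫ * ⟪u, v⟫)) * LinearMap.trace ℝ (ExteriorAlgebra ℝ V) 1 := by
  have hcm : ∀ y : V, cmap y = (1 : ℝ) • eps y - (1 : ℝ) • iot y := by
    intro y; simp [cmap]
  have htt : ∀ x y : V, ctil a₀ b₀ x * ctil a₀ b₀ y + ctil a₀ b₀ y * ctil a₀ b₀ x
      = (-(a₀ * b₀ + b₀ * a₀) * ⟪x, y⟫) • 1 := fun x y => gen_anti a₀ b₀ a₀ b₀ x y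
  have hts : ∀ x y : V, ctil a₀ b₀ x * cbar a₀ b₀ y + cbar a₀ b₀ y * ctil a₀ b₀ x
      = (-(a₀ * a₀ + b₀ * b₀) * ⟪x, y⟫) • 1 := fun x y => gen_anti a₀ b₀ b₀ a₀ x y
  have htm : ∀ x y : V, ctil a₀ b₀ x * cmap y + cmap y * ctil a₀ b₀ x
      = (-(a₀ * 1 + b₀ * 1) * ⟪x, y⟫) • 1 := by
    intro x y; rw [hcm y]; exact gen_anti a₀ b₀ 1 1 x y
  have hsm : ∀ x y : V, cbar a₀ b₀ x * cmap y + cmap y * cbar a₀ b₀ x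
      = (-(b₀ * 1 + a₀ * 1) * ⟪x, y⟫) • 1 := by
    intro x y; rw [hcm y]; exact gen_anti b₀ a₀ 1 1 x y
  have hmt : ∀ x y : V, cmap x * ctil a₀ b₀ y + ctil a₀ b₀ y * cmap x
      = (-(1 * b₀ + 1 * a₀) * ⟪x, y⟫) • 1 := by
    intro x y; rw [hcm x]; exact gen_anti 1 1 a₀ b₀ x y
  have e1 := tr6 (htt u v) (htt u w) (htt u ξ) (hts u ξ) (htm u X)
    (htt v w) (htt v ξ) (hts v ξ) (htm v X)
    (htt w ξ) (hts w ξ) (htm w X)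
    (hts ξ ξ) (htm ξ X) (hsm ξ X)
  have e2 := tr6 (htt u v) (htt u w) (htt u ξ) (htm u X) (htt u ξ)
    (htt v w) (htt v ξ) (htm v X) (htt v ξ)
    (htt w ξ) (htm w X) (htt w ξ)
    (htm ξ X) (htt ξ ξ) (hmt X ξ)
  rw [mul_add, map_add]
  simp only [mul_assoc]
  rw [e1, e2]
  rw [real_inner_comm u ξ, real_inner_comm v ξ, real_inner_comm w ξ,
    real_inner_comm u X, real_inner_comm v X, real_inner_comm w X, real_inner_comm X ξ]
  ring
end

section
/- For all vectors u, v, w, ξ, X in V, the trace of the composite endomorphism c̃(u)∘c̃(v)∘c̃(w)∘c̃(ξ)∘ε(ξ)∘ι(ξ)∘(c̄(ξ)∘c(X) + c(X)∘c̃(ξ))∘ε(ξ)∘ι(ξ) of ΛV equals −a₀²b₀³·|ξ|⁴·ξ(X)·[ξ(u)g(v,w) − ξ(v)g(u,w) + ξ(w)g(u,v)]·Tr(Id). -/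
open scoped RealInnerProductSpace

section Base
variable {V : Type*} [NormedAddCommGroup V] [InnerProductSpace ℝ V]

lemma eps_sq (a : V) (r : Module.End ℝ (ExteriorAlgebra ℝ V)) :
    eps a * (eps a * r) = 0 := by
  refine LinearMap.ext fun x => ?_
  simp [eps, LinearMap.mulLeft_apply, ← mul_assoc, ExteriorAlgebra.ι_sq_zero]

lemma iot_sq (a : V) (r : Module.End ℝ (ExteriorAlgebra ℝ V)) :
    iot a * (iot a * r) = 0 := by
  refine LinearMap.ext fun x => ?_
  simp [iot, CliffordAlgebra.contractLeft_contractLeft]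

lemma eps_swap (a b : V) (r : Module.End ℝ (ExteriorAlgebra ℝ V)) :
    eps a * (eps b * r) = -(eps b * (eps a * r)) := by
  refine LinearMap.ext fun x => ?_
  have h := ExteriorAlgebra.ι_add_mul_swap (R := ℝ) a b
  simp only [Module.End.mul_apply, LinearMap.neg_apply, eps, LinearMap.mulLeft_apply,
    ← mul_assoc]
  rw [eq_neg_of_add_eq_zero_left h]
  simp

lemma iot_swap (a b : V) (r : Module.End ℝ (ExteriorAlgebra ℝ V)) :
    iot a * (iot b * r) = -(iot b * (iot a * r)) := by
  refine LinearMap.ext fun x => ?_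
  simpa [iot] using CliffordAlgebra.contractLeft_comm (d := innerₛₗ ℝ a) (d' := innerₛₗ ℝ b) (r x)

lemma iot_eps_s16 (a b : V) (r : Module.End ℝ (ExteriorAlgebra ℝ V)) :
    iot a * (eps b * r) = ⟪a, b⟫ • r - eps b * (iot a * r) := by
  refine LinearMap.ext fun x => ?_
  have h := CliffordAlgebra.contractLeft_ι_mul (d := innerₛₗ ℝ a) b (r x)
  simpa [iot, eps] using h

lemma eps_sq' (a : V) : eps (V := V) a * eps a = 0 := by simpa using eps_sq a 1
lemma iot_sq' (a : V) : iot (V := V) a * iot a = 0 := by simpa using iot_sq a 1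
lemma eps_swap' (a b : V) : eps (V := V) a * eps b = -(eps b * eps a) := by
  simpa using eps_swap a b 1
lemma iot_swap' (a b : V) : iot (V := V) a * iot b = -(iot b * iot a) := by
  simpa using iot_swap a b 1
lemma iot_eps' (a b : V) : iot (V := V) a * eps b = ⟪a, b⟫ • 1 - eps b * iot a := by
  simpa using iot_eps_s16 a b 1

end Base

section Trace
variable {V : Type*} [NormedAddCommGroup V] [InnerProductSpace ℝ V] [FiniteDimensional ℝ V]

local notation "tr" => LinearMap.trace ℝ (ExteriorAlgebra ℝ V)

lemma trEE (a b : V) : tr (eps a * eps b) = 0 := by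
  have h := congrArg tr (eps_swap' a b)
  rw [map_neg] at h
  have h2 := LinearMap.trace_mul_comm ℝ (eps a) (eps b)
  linarith

lemma trII (a b : V) : tr (iot a * iot b) = 0 := by
  have h := congrArg tr (iot_swap' a b)
  rw [map_neg] at h
  have h2 := LinearMap.trace_mul_comm ℝ (iot a) (iot b)
  linarith

lemma trEI (a b : V) : tr (eps a * iot b) = ⟪b, a⟫ * tr 1 / 2 := by
  have h := congrArg tr (iot_eps' b a)
  rw [map_sub, map_smul, smul_eq_mul] at h
  have h2 := LinearMap.trace_mul_comm ℝ (iot b) (eps a)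
  linarith

lemma trIE (a b : V) : tr (iot a * eps b) = ⟪a, b⟫ * tr 1 / 2 := by
  rw [LinearMap.trace_mul_comm ℝ (iot a) (eps b), trEI]

end Trace

section Trace4
variable {V : Type*} [NormedAddCommGroup V] [InnerProductSpace ℝ V] [FiniteDimensional ℝ V]
local notation "tr" => LinearMap.trace ℝ (ExteriorAlgebra ℝ V)
set_option linter.unusedSectionVars false

lemma trEEII (a b c d : V) :
    tr (eps a * (eps b * (iot c * iot d))) = (⟪d,a⟫*⟪c,b⟫ - ⟪d,b⟫*⟪c,a⟫) * tr 1 / 4 := by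
  have cyc : tr (eps a * (eps b * (iot c * iot d))) = tr (iot d * (eps a * (eps b * iot c))) := by
    rw [show eps a * (eps b * (iot c * iot d)) = (eps a * (eps b * iot c)) * iot d from by
      noncomm_ring]
    exact LinearMap.trace_mul_comm ℝ _ _
  have exp1 : iot d * (eps a * (eps b * iot c))
      = ⟪d,a⟫ • (eps b * iot c) - ⟪d,b⟫ • (eps a * iot c)
        - eps a * (eps b * (iot c * iot d)) := by
    rw [iot_eps_s16 d a, iot_eps_s16 d b, iot_swap' d c]
    simp only [mul_sub, mul_smul_comm, mul_neg, mul_one, neg_neg, LinearMap.comp_neg, Module.End.mul_eq_comp]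
    abel
  have h := cyc.trans (congrArg tr exp1)
  rw [map_sub, map_sub, map_smul, map_smul, smul_eq_mul, smul_eq_mul, trEI, trEI] at h
  linarith

lemma trEIEI (a b c d : V) :
    tr (eps a * (iot b * (eps c * iot d))) = (⟪d,a⟫*⟪b,c⟫ + ⟪d,c⟫*⟪b,a⟫) * tr 1 / 4 := by
  have cyc : tr (eps a * (iot b * (eps c * iot d))) = tr (iot d * (eps a * (iot b * eps c))) := by
    rw [show eps a * (iot b * (eps c * iot d)) = (eps a * (iot b * eps c)) * iot d from by
      noncomm_ring]
    exact LinearMap.trace_mul_comm ℝ _ _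
  have exp1 : iot d * (eps a * (iot b * eps c))
      = ⟪d,a⟫ • (iot b * eps c) + ⟪d,c⟫ • (eps a * iot b)
        - eps a * (iot b * (eps c * iot d)) := by
    rw [iot_eps_s16 d a, iot_swap d b, iot_eps' d c]
    simp only [mul_sub, mul_smul_comm, mul_neg, mul_one, neg_neg, neg_sub, mul_add]
    abel
  have h := cyc.trans (congrArg tr exp1)
  rw [map_sub, map_add, map_smul, map_smul, smul_eq_mul, smul_eq_mul, trEI, trIE] at h
  linarith

lemma trIEEI (a b c d : V) :
    tr (iot a * (eps b * (eps c * iot d))) = (⟪d,c⟫*⟪a,b⟫ - ⟪d,b⟫*⟪a,c⟫) * tr 1 / 4 := by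
  have cyc : tr (iot a * (eps b * (eps c * iot d))) = tr (iot d * (iot a * (eps b * eps c))) := by
    rw [show iot a * (eps b * (eps c * iot d)) = (iot a * (eps b * eps c)) * iot d from by
      noncomm_ring]
    exact LinearMap.trace_mul_comm ℝ _ _
  have exp1 : iot d * (iot a * (eps b * eps c))
      = ⟪d,c⟫ • (iot a * eps b) - ⟪d,b⟫ • (iot a * eps c)
        - iot a * (eps b * (eps c * iot d)) := by
    rw [iot_swap d a, iot_eps_s16 d b, iot_eps' d c]
    simp only [mul_sub, mul_smul_comm, mul_neg, mul_one, neg_neg, neg_sub, mul_add]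
    abel
  have h := cyc.trans (congrArg tr exp1)
  rw [map_sub, map_sub, map_smul, map_smul, smul_eq_mul, smul_eq_mul, trIE, trIE] at h
  linarith

lemma trEEEI (a b c d : V) :
    tr (eps a * (eps b * (eps c * iot d))) = 0 := by
  have cyc : tr (eps a * (eps b * (eps c * iot d))) = tr (iot d * (eps a * (eps b * eps c))) := by
    rw [show eps a * (eps b * (eps c * iot d)) = (eps a * (eps b * eps c)) * iot d from by
      noncomm_ring]
    exact LinearMap.trace_mul_comm ℝ _ _
  have exp1 : iot d * (eps a * (eps b * eps c))
      = ⟪d,a⟫ • (eps b * eps c) - ⟪d,b⟫ • (eps a * eps c) + ⟪d,c⟫ • (eps a * eps b)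
        - eps a * (eps b * (eps c * iot d)) := by
    rw [iot_eps_s16 d a, iot_eps_s16 d b, iot_eps' d c]
    simp only [mul_sub, mul_smul_comm, mul_neg, mul_one, neg_neg, neg_sub, mul_add]
    abel
  have h := cyc.trans (congrArg tr exp1)
  rw [map_sub, map_add, map_sub, map_smul, map_smul, map_smul, smul_eq_mul, smul_eq_mul,
    smul_eq_mul, trEE, trEE, trEE] at h
  linarith

lemma trEIII (a b c d : V) :
    tr (eps a * (iot b * (iot c * iot d))) = 0 := by
  have cyc : tr (eps a * (iot b * (iot c * iot d))) = tr (iot d * (eps a * (iot b * iot c))) := by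
    rw [show eps a * (iot b * (iot c * iot d)) = (eps a * (iot b * iot c)) * iot d from by
      noncomm_ring]
    exact LinearMap.trace_mul_comm ℝ _ _
  have exp1 : iot d * (eps a * (iot b * iot c))
      = ⟪d,a⟫ • (iot b * iot c) - eps a * (iot b * (iot c * iot d)) := by
    rw [iot_eps_s16 d a, iot_swap d b, iot_swap' d c]
    simp only [mul_sub, mul_smul_comm, mul_neg, mul_one, neg_neg, neg_sub, mul_add, LinearMap.comp_neg, Module.End.mul_eq_comp]
  have h := cyc.trans (congrArg tr exp1)
  rw [map_sub, map_smul, smul_eq_mul, trII] at h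
  linarith

lemma trIEII (a b c d : V) :
    tr (iot a * (eps b * (iot c * iot d))) = 0 := by
  have cyc : tr (iot a * (eps b * (iot c * iot d))) = tr (iot d * (iot a * (eps b * iot c))) := by
    rw [show iot a * (eps b * (iot c * iot d)) = (iot a * (eps b * iot c)) * iot d from by
      noncomm_ring]
    exact LinearMap.trace_mul_comm ℝ _ _
  have exp1 : iot d * (iot a * (eps b * iot c))
      = -(⟪d,b⟫ • (iot a * iot c)) - iot a * (eps b * (iot c * iot d)) := by
    rw [iot_swap d a, iot_eps_s16 d b, iot_swap' d c]
    simp only [mul_sub, mul_smul_comm, mul_neg, mul_one, neg_neg, neg_sub, mul_add, LinearMap.comp_neg, Module.End.mul_eq_comp]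
    abel
  have h := cyc.trans (congrArg tr exp1)
  rw [map_sub, map_neg, map_smul, smul_eq_mul, trII] at h
  linarith

lemma trIIEI (a b c d : V) :
    tr (iot a * (iot b * (eps c * iot d))) = 0 := by
  have cyc : tr (iot a * (iot b * (eps c * iot d))) = tr (iot d * (iot a * (iot b * eps c))) := by
    rw [show iot a * (iot b * (eps c * iot d)) = (iot a * (iot b * eps c)) * iot d from by
      noncomm_ring]
    exact LinearMap.trace_mul_comm ℝ _ _
  have exp1 : iot d * (iot a * (iot b * eps c))
      = ⟪d,c⟫ • (iot a * iot b) - iot a * (iot b * (eps c * iot d)) := by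
    rw [iot_swap d a, iot_swap d b, iot_eps' d c]
    simp only [mul_sub, mul_smul_comm, mul_neg, mul_one, neg_neg, neg_sub, mul_add]
  have h := cyc.trans (congrArg tr exp1)
  rw [map_sub, map_smul, smul_eq_mul, trII] at h
  linarith

lemma trIIII (a b c d : V) :
    tr (iot a * (iot b * (iot c * iot d))) = 0 := by
  have cyc : tr (iot a * (iot b * (iot c * iot d))) = tr (iot d * (iot a * (iot b * iot c))) := by
    rw [show iot a * (iot b * (iot c * iot d)) = (iot a * (iot b * iot c)) * iot d from by
      noncomm_ring]
    exact LinearMap.trace_mul_comm ℝ _ _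
  have exp1 : iot d * (iot a * (iot b * iot c))
      = -(iot a * (iot b * (iot c * iot d))) := by
    rw [iot_swap d a, iot_swap d b, iot_swap' d c]
    simp only [mul_neg, neg_neg, LinearMap.neg_comp, LinearMap.comp_neg, Module.End.mul_eq_comp]
  have h := cyc.trans (congrArg tr exp1)
  rw [map_neg] at h
  linarith

end Trace4


section Ops
variable {V : Type*} [NormedAddCommGroup V] [InnerProductSpace ℝ V]

lemma End_mul_neg (x y : Module.End ℝ (ExteriorAlgebra ℝ V)) : x * -y = -(x * y) :=
  LinearMap.comp_neg y x

lemma End_neg_mul (x y : Module.End ℝ (ExteriorAlgebra ℝ V)) : -x * y = -(x * y) :=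
  LinearMap.neg_comp y x

lemma keyB (a₀ b₀ : ℝ) (ξ : V) :
    ctil a₀ b₀ ξ * (eps ξ * iot ξ) = (-(b₀ * ⟪ξ, ξ⟫)) • iot ξ := by
  simp only [ctil, sub_mul, smul_mul_assoc, eps_sq, iot_eps_s16, iot_sq, iot_sq', mul_zero, sub_zero,
    smul_smul, smul_zero, zero_sub, neg_smul]
  exact (neg_smul _ _).symm

lemma sand (a₀ b₀ : ℝ) (ξ X : V) :
    eps ξ * (iot ξ * ((cbar a₀ b₀ ξ * cmap X + cmap X * ctil a₀ b₀ ξ) * (eps ξ * iot ξ)))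
      = (-(2 * b₀ * ⟪ξ, X⟫ * ⟪ξ, ξ⟫)) • (eps ξ * iot ξ) := by
  simp only [cbar, cmap, ctil, add_mul, mul_add, sub_mul, mul_sub, smul_mul_assoc,
    mul_smul_comm, smul_sub, smul_add, smul_smul, mul_assoc]
  simp only [eps_sq, eps_sq', iot_sq, iot_sq', iot_eps_s16, iot_eps',
    eps_swap X ξ, eps_swap' X ξ, iot_swap X ξ, iot_swap' X ξ,
    mul_zero, zero_mul, mul_one, one_mul, mul_neg, neg_mul, mul_sub, sub_mul, mul_add, add_mul,
    mul_smul_comm, smul_mul_assoc, smul_sub, smul_add, smul_smul, smul_zero, zero_smul,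
    neg_neg, sub_zero, zero_sub, real_inner_comm X ξ, End_mul_neg, End_neg_mul]
  module

end Ops

section KeyC
variable {V : Type*} [NormedAddCommGroup V] [InnerProductSpace ℝ V] [FiniteDimensional ℝ V]
local notation "tr" => LinearMap.trace ℝ (ExteriorAlgebra ℝ V)
set_option linter.unusedSectionVars false

lemma keyC (a₀ b₀ : ℝ) (u v w ξ : V) :
    tr (ctil a₀ b₀ u * (ctil a₀ b₀ v * (ctil a₀ b₀ w * iot ξ)))
      = -(a₀ ^ 2 * b₀) * (⟪ξ, u⟫ * ⟪v, w⟫ - ⟪ξ, v⟫ * ⟪u, w⟫ + ⟪ξ, w⟫ * ⟪u, v⟫) * tr 1 / 2 := by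
  simp only [ctil, sub_mul, mul_sub, smul_mul_assoc, mul_smul_comm, smul_sub, smul_smul]
  simp only [map_sub, map_smul, smul_eq_mul]
  rw [trEEEI, trEEII, trEIEI, trEIII, trIEEI, trIEII, trIIEI, trIIII]
  rw [real_inner_comm w v, real_inner_comm w u, real_inner_comm v u]
  ring

end KeyC


theorem statement_16 {V : Type*} [NormedAddCommGroup V] [InnerProductSpace ℝ V]
    [FiniteDimensional ℝ V] (a₀ b₀ : ℝ) (u v w ξ X : V) :
    LinearMap.trace ℝ (ExteriorAlgebra ℝ V) (ctil a₀ b₀ u * ctil a₀ b₀ v * ctil a₀ b₀ w * ctil a₀ b₀ ξ * (eps ξ * iot ξ) * (cbar a₀ b₀ ξ * cmap X + cmap X * ctil a₀ b₀ ξ) * (eps ξ * iot ξ)) =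
      -(a₀ ^ 2 * b₀ ^ 3) * ⟪ξ, ξ⟫ ^ 2 * ⟪ξ, X⟫ * (⟪ξ, u⟫ * ⟪v, w⟫ - ⟪ξ, v⟫ * ⟪u, w⟫ + ⟪ξ, w⟫ * ⟪u, v⟫) * LinearMap.trace ℝ (ExteriorAlgebra ℝ V) 1 := by
  simp only [mul_assoc]
  rw [sand, mul_smul_comm, keyB, smul_smul]
  simp only [mul_smul_comm, map_smul, smul_eq_mul]
  rw [keyC]
  ring
end

section
/- For all vectors u, ξ, X in V, the following two trace identities hold for endomorphisms of ΛV: (1) Tr(c̃(u)∘c̃(ξ)∘(c̄(ξ)∘c(X) + c(X)∘c̃(ξ))) = [ a₀b₀(a₀+b₀)·ξ(X)·ξ(u) + ((a₀−b₀)²(a₀+b₀)/4)·(|ξ|²·g(u,X) − ξ(X)·ξ(u)) ]·Tr(Id); (2) Tr(c̃(u)∘c̃(ξ)∘(c̄(ξ)∘c(X) + c(X)∘c̃(ξ))∘ε(ξ)∘ι(ξ)) = [ (a₀(5b₀²−a₀²)/4)·|ξ|²·ξ(X)·ξ(u) + (a₀(a₀²−b₀²)/4)·|ξ|⁴·g(u,X)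 ]·Tr(Id). -/
open scoped RealInnerProductSpace

section generic
variable {M : Type*} [AddCommGroup M] [Module ℝ M]

private lemma pullE {x y : Module.End ℝ M} {c : ℝ} (h : x * y + y * x = c • 1) (z : Module.End ℝ M) :
    y * (x * z) = c • z - x * (y * z) := by
  have e : y * x = c • 1 - x * y := eq_sub_of_add_eq' h
  calc y * (x * z) = (y * x) * z := by rw [mul_assoc]
  _ = (c • 1 - x * y) * z := by rw [e]
  _ = c • z - x * (y * z) := by
      simp only [sub_mul, smul_mul_assoc, one_mul, mul_assoc]

private lemma trace2 (x y : Module.End ℝ M) (c : ℝ) (h : x * y + y * x = c • 1) :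
    LinearMap.trace ℝ M (x * y) = c / 2 * LinearMap.trace ℝ M 1 := by
  have h' := congrArg (LinearMap.trace ℝ M) h
  rw [map_add, LinearMap.trace_mul_comm ℝ y x, map_smul, smul_eq_mul] at h'
  linear_combination h' / 2

private lemma trace4 (x1 x2 x3 x4 : Module.End ℝ M) (c12 c13 c14 c23 c24 c34 : ℝ)
    (h12 : x1 * x2 + x2 * x1 = c12 • 1) (h13 : x1 * x3 + x3 * x1 = c13 • 1)
    (h14 : x1 * x4 + x4 * x1 = c14 • 1) (h23 : x2 * x3 + x3 * x2 = c23 • 1)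
    (h24 : x2 * x4 + x4 * x2 = c24 • 1) (h34 : x3 * x4 + x4 * x3 = c34 • 1) :
    LinearMap.trace ℝ M (x1 * (x2 * (x3 * x4))) =
      (c12 * c34 - c13 * c24 + c14 * c23) / 4 * LinearMap.trace ℝ M 1 := by
  have key : x4 * (x1 * (x2 * x3)) =
      c14 • (x2 * x3) - c24 • (x1 * x3) + c34 • (x1 * x2) - x1 * (x2 * (x3 * x4)) := by
    rw [pullE h14, pullE h24, eq_sub_of_add_eq' h34]
    simp only [mul_sub, mul_smul_comm, mul_one]
    abel
  have hcyc : LinearMap.trace ℝ M (x4 * (x1 * (x2 * x3))) =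
      LinearMap.trace ℝ M (x1 * (x2 * (x3 * x4))) := by
    rw [LinearMap.trace_mul_comm ℝ x4 (x1 * (x2 * x3)), mul_assoc, mul_assoc]
  have tkey := congrArg (LinearMap.trace ℝ M) key
  rw [hcyc, map_sub, map_add, map_sub, map_smul, map_smul, map_smul,
    trace2 x2 x3 c23 h23, trace2 x1 x3 c13 h13, trace2 x1 x2 c12 h12,
    smul_eq_mul, smul_eq_mul, smul_eq_mul] at tkey
  linear_combination tkey / 2


private lemma trace6 (x1 x2 x3 x4 x5 x6 : Module.End ℝ M)
    (c12 c13 c14 c15 c16 c23 c24 c25 c26 c34 c35 c36 c45 c46 c56 : ℝ)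
    (h12 : x1 * x2 + x2 * x1 = c12 • 1) (h13 : x1 * x3 + x3 * x1 = c13 • 1)
    (h14 : x1 * x4 + x4 * x1 = c14 • 1) (h15 : x1 * x5 + x5 * x1 = c15 • 1)
    (h16 : x1 * x6 + x6 * x1 = c16 • 1) (h23 : x2 * x3 + x3 * x2 = c23 • 1)
    (h24 : x2 * x4 + x4 * x2 = c24 • 1) (h25 : x2 * x5 + x5 * x2 = c25 • 1)
    (h26 : x2 * x6 + x6 * x2 = c26 • 1) (h34 : x3 * x4 + x4 * x3 = c34 • 1)
    (h35 : x3 * x5 + x5 * x3 = c35 • 1) (h36 : x3 * x6 + x6 * x3 = c36 • 1)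
    (h45 : x4 * x5 + x5 * x4 = c45 • 1) (h46 : x4 * x6 + x6 * x4 = c46 • 1)
    (h56 : x5 * x6 + x6 * x5 = c56 • 1) :
    LinearMap.trace ℝ M (x1 * (x2 * (x3 * (x4 * (x5 * x6))))) =
      (c16 * (c23 * c45 - c24 * c35 + c25 * c34)
       - c26 * (c13 * c45 - c14 * c35 + c15 * c34)
       + c36 * (c12 * c45 - c14 * c25 + c15 * c24)
       - c46 * (c12 * c35 - c13 * c25 + c15 * c23)
       + c56 * (c12 * c34 - c13 * c24 + c14 * c23)) / 8 * LinearMap.trace ℝ M 1 := by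
  have key : x6 * (x1 * (x2 * (x3 * (x4 * x5)))) =
      c16 • (x2 * (x3 * (x4 * x5))) - c26 • (x1 * (x3 * (x4 * x5)))
      + c36 • (x1 * (x2 * (x4 * x5))) - c46 • (x1 * (x2 * (x3 * x5)))
      + c56 • (x1 * (x2 * (x3 * x4))) - x1 * (x2 * (x3 * (x4 * (x5 * x6)))) := by
    rw [pullE h16, pullE h26, pullE h36, pullE h46, eq_sub_of_add_eq' h56]
    simp only [mul_sub, mul_smul_comm, mul_one]
    abel
  have tkey := congrArg (LinearMap.trace ℝ M) key
  rw [LinearMap.trace_mul_comm ℝ x6 (x1 * (x2 * (x3 * (x4 * x5))))] at tkey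
  simp only [mul_assoc, map_sub, map_add, map_smul, smul_eq_mul] at tkey
  rw [trace4 x2 x3 x4 x5 c23 c24 c25 c34 c35 c45 h23 h24 h25 h34 h35 h45,
    trace4 x1 x3 x4 x5 c13 c14 c15 c34 c35 c45 h13 h14 h15 h34 h35 h45,
    trace4 x1 x2 x4 x5 c12 c14 c15 c24 c25 c45 h12 h14 h15 h24 h25 h45,
    trace4 x1 x2 x3 x5 c12 c13 c15 c23 c25 c35 h12 h13 h15 h23 h25 h35,
    trace4 x1 x2 x3 x4 c12 c13 c14 c23 c24 c34 h12 h13 h14 h23 h24 h34] at tkey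
  linear_combination tkey / 2

end generic

section acomm
variable {V : Type*} [NormedAddCommGroup V] [InnerProductSpace ℝ V]

lemma acomm_ee (a b : V) :
    eps a * eps b + eps b * eps a = (0 : ℝ) • (1 : Module.End ℝ (ExteriorAlgebra ℝ V)) := by
  refine LinearMap.ext fun x => ?_
  simp only [eps, LinearMap.add_apply, Module.End.mul_apply, LinearMap.mulLeft_apply,
    zero_smul, LinearMap.zero_apply]
  rw [← mul_assoc, ← mul_assoc, ← add_mul, ExteriorAlgebra.ι_add_mul_swap, zero_mul]

lemma acomm_ii (a b : V) :
    iot a * iot b + iot b * iot a = (0 : ℝ) • (1 : Module.End ℝ (ExteriorAlgebra ℝ V)) := by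
  refine LinearMap.ext fun x => ?_
  have h := CliffordAlgebra.contractLeft_contractLeft (d := innerₛₗ ℝ a + innerₛₗ ℝ b) x
  simp only [map_add, LinearMap.add_apply,
    CliffordAlgebra.contractLeft_contractLeft] at h
  simp only [iot, LinearMap.add_apply, Module.End.mul_apply, zero_smul, LinearMap.zero_apply]
  linear_combination (norm := module) h
  
lemma acomm_ei (a b : V) :
    eps a * iot b + iot b * eps a = (⟪b, a⟫ : ℝ) • (1 : Module.End ℝ (ExteriorAlgebra ℝ V)) := by
  refine LinearMap.ext fun x => ?_
  simp only [eps, iot, LinearMap.add_apply, Module.End.mul_apply, LinearMap.mulLeft_apply,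
    LinearMap.smul_apply, Module.End.one_apply]
  rw [CliffordAlgebra.contractLeft_ι_mul]
  simp only [innerₛₗ_apply_apply]
  abel

/-- `op true = eps`, `op false = iot`. -/
noncomputable def op : Bool → V → Module.End ℝ (ExteriorAlgebra ℝ V)
  | true, v => eps v
  | false, v => iot v

/-- anticommutator constants -/
noncomputable def κ : Bool → Bool → V → V → ℝ
  | true, true, _, _ => 0
  | false, false, _, _ => 0
  | true, false, v, w => ⟪w, v⟫
  | false, true, v, w => ⟪v, w⟫

lemma acomm_op (s t : Bool) (v w : V) :
    op s v * op t w + op t w * op s v = κ s t v w • 1 := by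
  cases s <;> cases t
  · exact acomm_ii v w
  · rw [add_comm]; exact acomm_ei w v
  · exact acomm_ei v w
  · exact acomm_ee v w

variable (s1 s2 s3 s4 s5 s6 : Bool) (v1 v2 v3 v4 v5 v6 : V)

lemma trace4_op :
    LinearMap.trace ℝ (ExteriorAlgebra ℝ V) (op s1 v1 * (op s2 v2 * (op s3 v3 * op s4 v4))) =
      (κ s1 s2 v1 v2 * κ s3 s4 v3 v4 - κ s1 s3 v1 v3 * κ s2 s4 v2 v4
        + κ s1 s4 v1 v4 * κ s2 s3 v2 v3) / 4 *
        LinearMap.trace ℝ (ExteriorAlgebra ℝ V) 1 :=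
  trace4 _ _ _ _ _ _ _ _ _ _ (acomm_op s1 s2 v1 v2) (acomm_op s1 s3 v1 v3)
    (acomm_op s1 s4 v1 v4) (acomm_op s2 s3 v2 v3) (acomm_op s2 s4 v2 v4) (acomm_op s3 s4 v3 v4)

lemma trace6_op :
    LinearMap.trace ℝ (ExteriorAlgebra ℝ V)
        (op s1 v1 * (op s2 v2 * (op s3 v3 * (op s4 v4 * (op s5 v5 * op s6 v6))))) =
      (κ s1 s6 v1 v6 * (κ s2 s3 v2 v3 * κ s4 s5 v4 v5 - κ s2 s4 v2 v4 * κ s3 s5 v3 v5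
          + κ s2 s5 v2 v5 * κ s3 s4 v3 v4)
        - κ s2 s6 v2 v6 * (κ s1 s3 v1 v3 * κ s4 s5 v4 v5 - κ s1 s4 v1 v4 * κ s3 s5 v3 v5
          + κ s1 s5 v1 v5 * κ s3 s4 v3 v4)
        + κ s3 s6 v3 v6 * (κ s1 s2 v1 v2 * κ s4 s5 v4 v5 - κ s1 s4 v1 v4 * κ s2 s5 v2 v5
          + κ s1 s5 v1 v5 * κ s2 s4 v2 v4)
        - κ s4 s6 v4 v6 * (κ s1 s2 v1 v2 * κ s3 s5 v3 v5 - κ s1 s3 v1 v3 * κ s2 s5 v2 v5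
          + κ s1 s5 v1 v5 * κ s2 s3 v2 v3)
        + κ s5 s6 v5 v6 * (κ s1 s2 v1 v2 * κ s3 s4 v3 v4 - κ s1 s3 v1 v3 * κ s2 s4 v2 v4
          + κ s1 s4 v1 v4 * κ s2 s3 v2 v3)) / 8 *
        LinearMap.trace ℝ (ExteriorAlgebra ℝ V) 1 :=
  trace6 _ _ _ _ _ _ _ _ _ _ _ _ _ _ _ _ _ _ _ _ _
    (acomm_op s1 s2 v1 v2) (acomm_op s1 s3 v1 v3) (acomm_op s1 s4 v1 v4)
    (acomm_op s1 s5 v1 v5) (acomm_op s1 s6 v1 v6) (acomm_op s2 s3 v2 v3)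
    (acomm_op s2 s4 v2 v4) (acomm_op s2 s5 v2 v5) (acomm_op s2 s6 v2 v6)
    (acomm_op s3 s4 v3 v4) (acomm_op s3 s5 v3 v5) (acomm_op s3 s6 v3 v6)
    (acomm_op s4 s5 v4 v5) (acomm_op s4 s6 v4 v6) (acomm_op s5 s6 v5 v6)

lemma eps_eq_op (v : V) : eps v = op true v := rfl
lemma iot_eq_op (v : V) : iot v = op false v := rfl

end acomm

set_option maxHeartbeats 1000000 in
theorem statement_18 {V : Type*} [NormedAddCommGroup V] [InnerProductSpace ℝ V]
    [FiniteDimensional ℝ V] (a₀ b₀ : ℝ) (u ξ X : V) :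
    LinearMap.trace ℝ (ExteriorAlgebra ℝ V) (ctil a₀ b₀ u * ctil a₀ b₀ ξ * (cbar a₀ b₀ ξ * cmap X + cmap X * ctil a₀ b₀ ξ)) =
      (a₀ * b₀ * (a₀ + b₀) * ⟪ξ, X⟫ * ⟪ξ, u⟫ +
        (a₀ - b₀) ^ 2 * (a₀ + b₀) / 4 * (⟪ξ, ξ⟫ * ⟪u, X⟫ - ⟪ξ, X⟫ * ⟪ξ, u⟫)) * LinearMap.trace ℝ (ExteriorAlgebra ℝ V) 1 ∧
    LinearMap.trace ℝ (ExteriorAlgebra ℝ V) (ctil a₀ b₀ u * ctil a₀ b₀ ξ * (cbar a₀ b₀ ξ * cmap X + cmap X * ctil a₀ b₀ ξ) * (eps ξ * iot ξ)) =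
      (a₀ * (5 * b₀ ^ 2 - a₀ ^ 2) / 4 * ⟪ξ, ξ⟫ * ⟪ξ, X⟫ * ⟪ξ, u⟫ +
        a₀ * (a₀ ^ 2 - b₀ ^ 2) / 4 * ⟪ξ, ξ⟫ ^ 2 * ⟪u, X⟫) * LinearMap.trace ℝ (ExteriorAlgebra ℝ V) 1 := by
  constructor
  · simp only [ctil, cbar, cmap, eps_eq_op, iot_eq_op]
    simp only [sub_mul, mul_sub, add_mul, mul_add, smul_mul_assoc, mul_smul_comm, smul_smul,
      smul_sub, smul_add, mul_assoc, map_add, map_sub, map_smul, smul_eq_mul]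
    simp only [trace4_op, κ]
    simp only [real_inner_comm u ξ, real_inner_comm X ξ, real_inner_comm X u]
    ring
  · simp only [ctil, cbar, cmap, eps_eq_op, iot_eq_op]
    simp only [sub_mul, mul_sub, add_mul, mul_add, smul_mul_assoc, mul_smul_comm, smul_smul,
      smul_sub, smul_add, mul_assoc, map_add, map_sub, map_smul, smul_eq_mul]
    simp only [trace6_op, κ]
    simp only [real_inner_comm u ξ, real_inner_comm X ξ, real_inner_comm X u]
    ring
end

section
/- For all vectors u, ξ, X in V, the following two trace identities hold for endomorphisms of ΛV: (1) Tr(c̃(u)∘c̃(ξ)∘ε(ξ)∘ι(ξ)∘(c̄(ξ)∘c(X) + c(X)∘c̃(ξ))) = [ (b₀(a₀²+4a₀b₀−b₀²)/4)·|ξ|²·ξ(X)·ξ(u) − (b₀(a₀²−b₀²)/4)·|ξ|⁴·g(u,X) ]·Tr(Id); (2) Tr(c̃(u)∘c̃(ξ)∘ε(ξ)∘ι(ξ)∘(c̄(ξ)∘c(X) + c(X)∘c̃(ξ))∘ε(ξ)∘ι(ξ)) = a₀b₀²·|ξ|⁴·ξ(X)·ξ(u)·Tr(Id). -/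
open scoped RealInnerProductSpace

section Infra

variable {M : Type*} [AddCommGroup M] [Module ℝ M]

theorem tr2_s19 (x y : Module.End ℝ M) (α : ℝ) (h : y*x = α•(1:Module.End ℝ M) - x*y) :
    LinearMap.trace ℝ M (x*y) = α/2 * LinearMap.trace ℝ M 1 := by
  have hc := LinearMap.trace_mul_comm ℝ x y
  rw [h] at hc
  simp only [map_sub, map_smul, smul_eq_mul] at hc
  linarith

theorem tr4_s19 (x y z w : Module.End ℝ M) (α β γ : ℝ)
    (hy : y*x = α•(1:Module.End ℝ M) - x*y)
    (hz : z*x = β•(1:Module.End ℝ M) - x*z)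
    (hw : w*x = γ•(1:Module.End ℝ M) - x*w) :
    LinearMap.trace ℝ M (x*(y*(z*w))) =
      (α * LinearMap.trace ℝ M (z*w) - β * LinearMap.trace ℝ M (y*w)
        + γ * LinearMap.trace ℝ M (y*z))/2 := by
  have Hy : ∀ t, y*(x*t) = α•t - x*(y*t) := fun t => by
    rw [← mul_assoc, hy, sub_mul, smul_mul_assoc, one_mul, mul_assoc]
  have Hz : ∀ t, z*(x*t) = β•t - x*(z*t) := fun t => by
    rw [← mul_assoc, hz, sub_mul, smul_mul_assoc, one_mul, mul_assoc]
  have key : (y*(z*w))*x = γ•(y*z) - β•(y*w) + α•(z*w) - x*(y*(z*w)) := by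
    rw [mul_assoc, mul_assoc, hw]
    simp only [mul_sub, mul_smul_comm, mul_one, Hz, Hy, smul_sub]
    abel
  have hc := LinearMap.trace_mul_comm ℝ x (y*(z*w))
  rw [key] at hc
  simp only [map_add, map_sub, map_smul, smul_eq_mul] at hc
  linarith

theorem tr6_s19 (x y z w p r : Module.End ℝ M) (α β γ δ ε : ℝ)
    (hy : y*x = α•(1:Module.End ℝ M) - x*y)
    (hz : z*x = β•(1:Module.End ℝ M) - x*z)
    (hw : w*x = γ•(1:Module.End ℝ M) - x*w)
    (hp : p*x = δ•(1:Module.End ℝ M) - x*p)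
    (hr : r*x = ε•(1:Module.End ℝ M) - x*r) :
    LinearMap.trace ℝ M (x*(y*(z*(w*(p*r))))) =
      (α * LinearMap.trace ℝ M (z*(w*(p*r))) - β * LinearMap.trace ℝ M (y*(w*(p*r)))
        + γ * LinearMap.trace ℝ M (y*(z*(p*r))) - δ * LinearMap.trace ℝ M (y*(z*(w*r)))
        + ε * LinearMap.trace ℝ M (y*(z*(w*p))))/2 := by
  have Hy : ∀ t, y*(x*t) = α•t - x*(y*t) := fun t => by
    rw [← mul_assoc, hy, sub_mul, smul_mul_assoc, one_mul, mul_assoc]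
  have Hz : ∀ t, z*(x*t) = β•t - x*(z*t) := fun t => by
    rw [← mul_assoc, hz, sub_mul, smul_mul_assoc, one_mul, mul_assoc]
  have Hw : ∀ t, w*(x*t) = γ•t - x*(w*t) := fun t => by
    rw [← mul_assoc, hw, sub_mul, smul_mul_assoc, one_mul, mul_assoc]
  have Hp : ∀ t, p*(x*t) = δ•t - x*(p*t) := fun t => by
    rw [← mul_assoc, hp, sub_mul, smul_mul_assoc, one_mul, mul_assoc]
  have key : (y*(z*(w*(p*r))))*x =
      ε•(y*(z*(w*p))) - δ•(y*(z*(w*r))) + γ•(y*(z*(p*r))) - β•(y*(w*(p*r)))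
        + α•(z*(w*(p*r))) - x*(y*(z*(w*(p*r)))) := by
    rw [mul_assoc, mul_assoc, mul_assoc, mul_assoc, hr]
    simp only [mul_sub, mul_smul_comm, mul_one, Hp, Hw, Hz, Hy, smul_sub]
    abel
  have hc := LinearMap.trace_mul_comm ℝ x (y*(z*(w*(p*r))))
  rw [key] at hc
  simp only [map_add, map_sub, map_smul, smul_eq_mul] at hc
  linarith

end Infra

noncomputable def Lc {V : Type*} [NormedAddCommGroup V] [InnerProductSpace ℝ V]
    (α β : ℝ) (v : V) : Module.End ℝ (ExteriorAlgebra ℝ V) :=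
  α • eps v + β • iot v

section Base

variable {V : Type*} [NormedAddCommGroup V] [InnerProductSpace ℝ V]

theorem base1 (v w : V) :
    eps v * eps w + eps w * eps v = (0 : Module.End ℝ (ExteriorAlgebra ℝ V)) := by
  refine LinearMap.ext fun x => ?_
  show ExteriorAlgebra.ι ℝ v * (ExteriorAlgebra.ι ℝ w * x)
      + ExteriorAlgebra.ι ℝ w * (ExteriorAlgebra.ι ℝ v * x) = 0
  rw [← mul_assoc, ← mul_assoc, ← add_mul, ExteriorAlgebra.ι_add_mul_swap, zero_mul]

theorem base2 (v w : V) :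
    iot v * iot w + iot w * iot v = (0 : Module.End ℝ (ExteriorAlgebra ℝ V)) := by
  refine LinearMap.ext fun x => ?_
  show CliffordAlgebra.contractLeft (innerₛₗ ℝ v) (CliffordAlgebra.contractLeft (innerₛₗ ℝ w) x)
      + _ = (0:ExteriorAlgebra ℝ V)
  rw [CliffordAlgebra.contractLeft_comm]
  show -(CliffordAlgebra.contractLeft (innerₛₗ ℝ w)) ((CliffordAlgebra.contractLeft (innerₛₗ ℝ v)) x)
      + (CliffordAlgebra.contractLeft (innerₛₗ ℝ w)) ((CliffordAlgebra.contractLeft (innerₛₗ ℝ v)) x) = 0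
  abel

theorem base3 (v w : V) :
    eps v * iot w + iot w * eps v
      = (⟪w,v⟫ : ℝ) • (1 : Module.End ℝ (ExteriorAlgebra ℝ V)) := by
  refine LinearMap.ext fun x => ?_
  show ExteriorAlgebra.ι ℝ v * (CliffordAlgebra.contractLeft (innerₛₗ ℝ w) x)
      + CliffordAlgebra.contractLeft (innerₛₗ ℝ w) (ExteriorAlgebra.ι ℝ v * x) = ⟪w,v⟫ • x
  rw [CliffordAlgebra.contractLeft_ι_mul]
  simp only [innerₛₗ_apply_apply]
  abel

theorem keyL (α β γ δ : ℝ) (v w : V) :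
    Lc γ δ w * Lc α β v =
      ((α*δ+β*γ)*⟪v,w⟫) • (1 : Module.End ℝ (ExteriorAlgebra ℝ V)) - Lc α β v * Lc γ δ w := by
  have h1 : eps w * eps v = -(eps v * eps w) :=
    eq_neg_of_add_eq_zero_right (base1 v w)
  have h2 : iot w * iot v = -(iot v * iot w) :=
    eq_neg_of_add_eq_zero_right (base2 v w)
  have h3 : iot w * eps v = (⟪w,v⟫:ℝ)•(1 : Module.End ℝ (ExteriorAlgebra ℝ V)) - eps v * iot w :=
    eq_sub_of_add_eq' (base3 v w)
  have h4 : eps w * iot v = (⟪v,w⟫:ℝ)•(1 : Module.End ℝ (ExteriorAlgebra ℝ V)) - iot v * eps w :=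
    eq_sub_of_add_eq (base3 w v)
  simp only [Lc, add_mul, mul_add, smul_mul_assoc, mul_smul_comm, h1, h2, h3, h4,
    real_inner_comm w v]
  module

end Base

set_option maxHeartbeats 1000000 in
theorem statement_19 {V : Type*} [NormedAddCommGroup V] [InnerProductSpace ℝ V]
    [FiniteDimensional ℝ V] (a₀ b₀ : ℝ) (u ξ X : V) :
    LinearMap.trace ℝ (ExteriorAlgebra ℝ V) (ctil a₀ b₀ u * ctil a₀ b₀ ξ * (eps ξ * iot ξ) * (cbar a₀ b₀ ξ * cmap X + cmap X * ctil a₀ b₀ ξ)) =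
      (b₀ * (a₀ ^ 2 + 4 * a₀ * b₀ - b₀ ^ 2) / 4 * ⟪ξ, ξ⟫ * ⟪ξ, X⟫ * ⟪ξ, u⟫ -
        b₀ * (a₀ ^ 2 - b₀ ^ 2) / 4 * ⟪ξ, ξ⟫ ^ 2 * ⟪u, X⟫) * LinearMap.trace ℝ (ExteriorAlgebra ℝ V) 1 ∧
    LinearMap.trace ℝ (ExteriorAlgebra ℝ V) (ctil a₀ b₀ u * ctil a₀ b₀ ξ * (eps ξ * iot ξ) * (cbar a₀ b₀ ξ * cmap X + cmap X * ctil a₀ b₀ ξ) * (eps ξ * iot ξ)) =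
      a₀ * b₀ ^ 2 * ⟪ξ, ξ⟫ ^ 2 * ⟪ξ, X⟫ * ⟪ξ, u⟫ * LinearMap.trace ℝ (ExteriorAlgebra ℝ V) 1 := by
  have hc1 : ∀ v : V, ctil a₀ b₀ v = Lc a₀ (-b₀) v := fun v => by
    simp [ctil, Lc, sub_eq_add_neg, neg_smul]
    module
  have hc2 : cbar a₀ b₀ ξ = Lc b₀ (-a₀) ξ := by
    simp [cbar, Lc, sub_eq_add_neg, neg_smul]
    module
  have hc3 : cmap X = Lc 1 (-1) X := by
    simp [cmap, Lc, sub_eq_add_neg, neg_smul]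
    module
  have hc4 : eps ξ = Lc 1 0 ξ := by simp [Lc]
  have hc5 : iot ξ = Lc 0 1 ξ := by simp [Lc]
  rw [hc1 u, hc1 ξ, hc2, hc3, hc4, hc5]
  -- decompositions
  have hA_decomp : Lc a₀ (-b₀) ξ = a₀•(Lc 1 0 ξ) + (-b₀)•(Lc 0 1 ξ) := by
    simp only [Lc]; module
  have hB_decomp : Lc b₀ (-a₀) ξ = b₀•(Lc 1 0 ξ) + (-a₀)•(Lc 0 1 ξ) := by
    simp only [Lc]; module
  -- square-zero and commutation facts
  have rEE : Lc 1 0 ξ * Lc 1 0 ξ = (0 : Module.End ℝ (ExteriorAlgebra ℝ V)) := by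
    have h := keyL (1:ℝ) 0 1 0 ξ ξ
    norm_num at h
    have h2 : (2:ℝ) • (Lc 1 0 ξ * Lc 1 0 ξ) = 0 := by
      rw [two_smul]; nth_rewrite 1 [h]; abel
    exact (smul_eq_zero.mp h2).resolve_left (by norm_num)
  have rII : Lc 0 1 ξ * Lc 0 1 ξ = (0 : Module.End ℝ (ExteriorAlgebra ℝ V)) := by
    have h := keyL (0:ℝ) 1 0 1 ξ ξ
    norm_num at h
    have h2 : (2:ℝ) • (Lc 0 1 ξ * Lc 0 1 ξ) = 0 := by
      rw [two_smul]; nth_rewrite 1 [h]; abel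
    exact (smul_eq_zero.mp h2).resolve_left (by norm_num)
  have rIE : Lc 0 1 ξ * Lc 1 0 ξ
      = (⟪ξ,ξ⟫:ℝ)•(1 : Module.End ℝ (ExteriorAlgebra ℝ V)) - Lc 1 0 ξ * Lc 0 1 ξ := by
    have h := keyL (1:ℝ) 0 0 1 ξ ξ
    norm_num at h
    rw [real_inner_self_eq_norm_sq]
    exact h
  -- operator simplifications
  have hAEI : Lc a₀ (-b₀) ξ * (Lc 1 0 ξ * Lc 0 1 ξ) = (-(b₀*⟪ξ,ξ⟫))•(Lc 0 1 ξ) := by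
    rw [hA_decomp, add_mul, smul_mul_assoc, smul_mul_assoc, ← mul_assoc, rEE, zero_mul,
      ← mul_assoc, rIE, sub_mul, smul_mul_assoc, one_mul, mul_assoc, rII, mul_zero, sub_zero]
    module
  have hAEI' : ∀ t : Module.End ℝ (ExteriorAlgebra ℝ V),
      Lc a₀ (-b₀) ξ * (Lc 1 0 ξ * (Lc 0 1 ξ * t)) = (-(b₀*⟪ξ,ξ⟫))•(Lc 0 1 ξ * t) := fun t => by
    rw [← mul_assoc, ← mul_assoc, mul_assoc (Lc a₀ (-b₀) ξ), hAEI, smul_mul_assoc]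
  have hIB : Lc 0 1 ξ * Lc b₀ (-a₀) ξ
      = (b₀*⟪ξ,ξ⟫)•(1 : Module.End ℝ (ExteriorAlgebra ℝ V)) - b₀•(Lc 1 0 ξ * Lc 0 1 ξ) := by
    rw [hB_decomp, mul_add, mul_smul_comm, mul_smul_comm, rII, rIE]
    module
  have hIB' : ∀ t : Module.End ℝ (ExteriorAlgebra ℝ V),
      Lc 0 1 ξ * (Lc b₀ (-a₀) ξ * t)
        = (b₀*⟪ξ,ξ⟫)•t - b₀•(Lc 1 0 ξ * (Lc 0 1 ξ * t)) := fun t => by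
    rw [← mul_assoc, hIB, sub_mul, smul_mul_assoc, smul_mul_assoc, one_mul, mul_assoc]
  -- pair traces
  have P1 := tr2_s19 _ _ _ (keyL a₀ (-b₀) 1 (-1) u X)
  have P2 := tr2_s19 _ _ _ (keyL (0:ℝ) 1 1 (-1) ξ X)
  have P3 := tr2_s19 _ _ _ (keyL (1:ℝ) 0 1 (-1) ξ X)
  have P4 := tr2_s19 _ _ _ (keyL (1:ℝ) 0 0 1 ξ ξ)
  have P5 := tr2_s19 _ _ _ (keyL (1:ℝ) (-1) a₀ (-b₀) X ξ)
  have P6 := tr2_s19 _ _ _ (keyL (0:ℝ) 1 a₀ (-b₀) ξ ξ)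
  have P7 := tr2_s19 _ _ _ (keyL (1:ℝ) (-1) 0 1 X ξ)
  have P8 := tr2_s19 _ _ _ (keyL (0:ℝ) 1 0 1 ξ ξ)
  have P9 := tr2_s19 _ _ _ (keyL (0:ℝ) 1 1 0 ξ ξ)
  have P10 := tr2_s19 _ _ _ (keyL (1:ℝ) (-1) 1 0 X ξ)
  -- four-letter traces
  have F1 := tr4_s19 _ _ _ _ _ _ _ (keyL a₀ (-b₀) 1 0 u ξ) (keyL a₀ (-b₀) 0 1 u ξ)
    (keyL a₀ (-b₀) 1 (-1) u X)
  rw [P2, P3, P4] at F1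
  have F2 := tr4_s19 _ _ _ _ _ _ _ (keyL a₀ (-b₀) 0 1 u ξ) (keyL a₀ (-b₀) 1 (-1) u X)
    (keyL a₀ (-b₀) a₀ (-b₀) u ξ)
  rw [P5, P6, P2] at F2
  have F3 := tr4_s19 _ _ _ _ _ _ _ (keyL a₀ (-b₀) 0 1 u ξ) (keyL a₀ (-b₀) 1 (-1) u X)
    (keyL a₀ (-b₀) 0 1 u ξ)
  rw [P7, P8, P2] at F3
  have F4 := tr4_s19 _ _ _ _ _ _ _ (keyL a₀ (-b₀) 1 (-1) u X) (keyL a₀ (-b₀) 1 0 u ξ)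
    (keyL a₀ (-b₀) 0 1 u ξ)
  rw [P4, P7, P10] at F4
  have F5 := tr4_s19 _ _ _ _ _ _ _ (keyL (0:ℝ) 1 1 (-1) ξ X) (keyL (0:ℝ) 1 1 0 ξ ξ)
    (keyL (0:ℝ) 1 0 1 ξ ξ)
  rw [P4, P7, P10] at F5
  have F6 := tr4_s19 _ _ _ _ _ _ _ (keyL (1:ℝ) 0 1 (-1) ξ X) (keyL (1:ℝ) 0 1 0 ξ ξ)
    (keyL (1:ℝ) 0 0 1 ξ ξ)
  rw [P4, P7, P10] at F6
  have F7 := tr4_s19 _ _ _ _ _ _ _ (keyL (1:ℝ) 0 0 1 ξ ξ) (keyL (1:ℝ) 0 1 0 ξ ξ)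
    (keyL (1:ℝ) 0 0 1 ξ ξ)
  rw [P4, P8, P9] at F7
  have F8 := tr4_s19 _ _ _ _ _ _ _ (keyL (1:ℝ) 0 0 1 ξ ξ) (keyL (1:ℝ) 0 1 (-1) ξ X)
    (keyL (1:ℝ) 0 0 1 ξ ξ)
  rw [P7, P8, P2] at F8
  have F9 := tr4_s19 _ _ _ _ _ _ _ (keyL (1:ℝ) 0 0 1 ξ ξ) (keyL (1:ℝ) 0 1 (-1) ξ X)
    (keyL (1:ℝ) 0 1 0 ξ ξ)
  rw [P10, P9, P2] at F9
  -- six-letter trace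
  have G := tr6_s19 _ _ _ _ _ _ _ _ _ _ _ (keyL a₀ (-b₀) 1 0 u ξ) (keyL a₀ (-b₀) 0 1 u ξ)
    (keyL a₀ (-b₀) 1 (-1) u X) (keyL a₀ (-b₀) 1 0 u ξ) (keyL a₀ (-b₀) 0 1 u ξ)
  rw [F5, F6, F7, F8, F9] at G
  -- operator level rewrites of the two big products
  have op1 : Lc a₀ (-b₀) u * Lc a₀ (-b₀) ξ * (Lc 1 0 ξ * Lc 0 1 ξ)
        * (Lc b₀ (-a₀) ξ * Lc 1 (-1) X + Lc 1 (-1) X * Lc a₀ (-b₀) ξ)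
      = (-(b₀*⟪ξ,ξ⟫))•((b₀*⟪ξ,ξ⟫)•(Lc a₀ (-b₀) u * Lc 1 (-1) X)
          - b₀•(Lc a₀ (-b₀) u * (Lc 1 0 ξ * (Lc 0 1 ξ * Lc 1 (-1) X)))
          + Lc a₀ (-b₀) u * (Lc 0 1 ξ * (Lc 1 (-1) X * Lc a₀ (-b₀) ξ))) := by
    simp only [mul_add, add_mul, mul_assoc, smul_mul_assoc, hAEI', hIB', hAEI, mul_smul_comm,
      mul_sub, smul_sub, smul_add, smul_smul]
  have op2 : Lc a₀ (-b₀) u * Lc a₀ (-b₀) ξ * (Lc 1 0 ξ * Lc 0 1 ξ)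
        * (Lc b₀ (-a₀) ξ * Lc 1 (-1) X + Lc 1 (-1) X * Lc a₀ (-b₀) ξ)
        * (Lc 1 0 ξ * Lc 0 1 ξ)
      = (-(b₀*⟪ξ,ξ⟫))•((b₀*⟪ξ,ξ⟫)•(Lc a₀ (-b₀) u * (Lc 1 (-1) X * (Lc 1 0 ξ * Lc 0 1 ξ)))
          - b₀•(Lc a₀ (-b₀) u * (Lc 1 0 ξ * (Lc 0 1 ξ * (Lc 1 (-1) X * (Lc 1 0 ξ * Lc 0 1 ξ)))))
          + (-(b₀*⟪ξ,ξ⟫))•(Lc a₀ (-b₀) u * (Lc 0 1 ξ * (Lc 1 (-1) X * Lc 0 1 ξ)))) := by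
    simp only [mul_add, add_mul, mul_assoc, smul_mul_assoc, hAEI', hIB', hAEI, mul_smul_comm,
      mul_sub, smul_sub, smul_add, smul_smul, sub_mul]
    try module
  constructor
  · rw [op1]
    simp only [map_add, map_sub, map_smul, smul_eq_mul]
    rw [P1, F1, F2]
    simp only [real_inner_comm ξ X, real_inner_comm u ξ]
    ring
  · rw [op2]
    simp only [map_add, map_sub, map_smul, smul_eq_mul]
    rw [F4, G, F3]
    simp only [real_inner_comm ξ X, real_inner_comm u ξ]
    ring
end
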